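/- arXiv:1404.2648 — 5 statements merged into one kernel-verified Lean document; each statement's English description precedes it below -/
import Mathlib

section
/- For every ε > 0 there exist a positive integer g and a set S of positive integers such that for every positive integer n the number of representations n = s₁ + s₂ with s₁, s₂ ∈ S and s₁ ≤ s₂ is at most g, and such that card(S ∩ {1, …, n}) > n^{1/2 − ε} for all sufficiently large n. -/
/-! The set is a union of blocks `B_k ⊆ [N_k, 2N_k)` with `N_k = 2^(2(L+1)(k+L))` and
`#B_k = m_k = 2^(L(k+L))`, so that `m_k ≈ N_k^(1/2 - 1/(2L+2))`. Each block is chosen among the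
`m_k`-subsets of `[N_k, 2N_k)` by a counting (first moment) argument: a fixed set of `t` elements
lies in at most a fraction `(m_k/N_k)^t` of them, so by a union bound fewer than half of them
have more than `2L+2` representations of some `n` inside the block, and fewer than half have more
than `L+1` representations with the smaller summand in one of the (at most `m_k`) earlier elements.
Since `N_{k+1} ≥ 4 N_k`, the block containing the larger summand of a representation of `n` is
determined by `n`, so the union is of type `B₂(3L+3)`; and for `2N_k ≤ n < 2N_{k+1}` it has at
least `m_k > n^(1/2-ε)` elements up to `n` once `εL ≥ 1`. -/

open Filter Finset

namespace ErdosRenyi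

theorem pow_mul_choose_sub_le {N m t : ℕ} (htm : t ≤ m) (hmN : m ≤ N) :
    N ^ t * (N - t).choose (m - t) ≤ m ^ t * N.choose m := by
  induction t with
  | zero => simp
  | succ t ih =>
    have hpascal : (N - t) * (N - (t + 1)).choose (m - (t + 1)) =
        (N - t).choose (m - t) * (m - t) := by
      rw [show N - t = N - (t + 1) + 1 by omega, show m - t = m - (t + 1) + 1 by omega]
      exact Nat.add_one_mul_choose_eq _ _
    have hratio : N * (m - t) ≤ m * (N - t) := by
      zify [htm.trans' t.le_succ, (htm.trans hmN).trans' t.le_succ]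
      nlinarith
    have hstep : N * (N - (t + 1)).choose (m - (t + 1)) ≤ m * (N - t).choose (m - t) := by
      refine Nat.le_of_mul_le_mul_left ?_ (show 0 < N - t by omega)
      calc (N - t) * (N * (N - (t + 1)).choose (m - (t + 1)))
          = N * (m - t) * (N - t).choose (m - t) := by rw [mul_left_comm, hpascal]; ring
        _ ≤ m * (N - t) * (N - t).choose (m - t) := by gcongr
        _ = (N - t) * (m * (N - t).choose (m - t)) := by ring
    calc N ^ (t + 1) * (N - (t + 1)).choose (m - (t + 1))
        = N ^ t * (N * (N - (t + 1)).choose (m - (t + 1))) := by ring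
      _ ≤ N ^ t * (m * (N - t).choose (m - t)) := by gcongr
      _ = m * (N ^ t * (N - t).choose (m - t)) := by ring
      _ ≤ m * (m ^ t * N.choose m) := Nat.mul_le_mul_left _ (ih (by omega))
      _ = m ^ (t + 1) * N.choose m := by ring

theorem card_image_powersetCard_le {α β : Type*} [DecidableEq β] (s : Finset α) (k : ℕ)
    (f : Finset α → β) : #((s.powersetCard k).image f) ≤ #s ^ k :=
  card_image_le.trans ((card_powersetCard k s).trans_le (Nat.choose_le_pow _ _))

section

variable {α : Type*} [DecidableEq α]

theorem card_filter_superset_mul_pow_le {I F : Finset α} {m t : ℕ} (hmI : m ≤ #I)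
    (htF : t ≤ #F) :
    #{B ∈ I.powersetCard m | F ⊆ B} * #I ^ t ≤ m ^ t * (#I).choose m := by
  obtain ⟨F', hF'F, rfl⟩ := exists_subset_card_eq htF
  calc #{B ∈ I.powersetCard m | F ⊆ B} * #I ^ #F'
      ≤ #{B ∈ I.powersetCard m | F' ⊆ B} * #I ^ #F' := by
        gcongr with B
    _ ≤ m ^ #F' * (#I).choose m := by
      by_cases h : F' ⊆ I ∧ #F' ≤ m
      · rw [card_filter_powersetCard_subset _ _ _ h.1 h.2, mul_comm]
        exact pow_mul_choose_sub_le h.2 hmI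
      · rw [filter_eq_empty_iff.2, card_empty, zero_mul]
        · exact Nat.zero_le _
        intro B hB hF'B
        rw [mem_powersetCard] at hB
        exact h ⟨hF'B.trans hB.1, hB.2 ▸ card_le_card hF'B⟩

theorem two_mul_card_filter_exists_superset_lt {I : Finset α} {𝓕 : Finset (Finset α)}
    {m t : ℕ} (hmI : m ≤ #I) (h𝓕 : ∀ F ∈ 𝓕, t ≤ #F) (hsmall : 2 * #𝓕 * m ^ t < #I ^ t) :
    2 * #{B ∈ I.powersetCard m | ∃ F ∈ 𝓕, F ⊆ B} < (#I).choose m := by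
  have hcover : {B ∈ I.powersetCard m | ∃ F ∈ 𝓕, F ⊆ B} ⊆
      𝓕.biUnion fun F => {B ∈ I.powersetCard m | F ⊆ B} := by
    intro B hB
    obtain ⟨hB, F, hF, hFB⟩ := mem_filter.1 hB
    exact mem_biUnion.2 ⟨F, hF, mem_filter.2 ⟨hB, hFB⟩⟩
  have hunion : #{B ∈ I.powersetCard m | ∃ F ∈ 𝓕, F ⊆ B} * #I ^ t ≤
      #𝓕 * (m ^ t * (#I).choose m) := by
    calc #{B ∈ I.powersetCard m | ∃ F ∈ 𝓕, F ⊆ B} * #I ^ t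
        ≤ (∑ F ∈ 𝓕, #{B ∈ I.powersetCard m | F ⊆ B}) * #I ^ t := by
          gcongr; exact (card_le_card hcover).trans card_biUnion_le
      _ = ∑ F ∈ 𝓕, #{B ∈ I.powersetCard m | F ⊆ B} * #I ^ t := sum_mul _ _ _
      _ ≤ ∑ _F ∈ 𝓕, m ^ t * (#I).choose m :=
          sum_le_sum fun F hF => card_filter_superset_mul_pow_le hmI (h𝓕 F hF)
      _ = #𝓕 * (m ^ t * (#I).choose m) := by rw [sum_const, smul_eq_mul]
  refine Nat.lt_of_mul_lt_mul_right (a := #I ^ t) ?_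
  calc 2 * #{B ∈ I.powersetCard m | ∃ F ∈ 𝓕, F ⊆ B} * #I ^ t
      ≤ 2 * #𝓕 * m ^ t * (#I).choose m := by rw [mul_assoc]; nlinarith
    _ < #I ^ t * (#I).choose m := Nat.mul_lt_mul_of_pos_right hsmall (Nat.choose_pos hmI)
    _ = (#I).choose m * #I ^ t := mul_comm _ _

theorem exists_mem_powersetCard_forall_not_superset {I : Finset α} {𝓕 𝓖 : Finset (Finset α)}
    {m s t : ℕ} (hmI : m ≤ #I) (h𝓕 : ∀ F ∈ 𝓕, s ≤ #F) (h𝓖 : ∀ G ∈ 𝓖, t ≤ #G)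
    (h𝓕small : 2 * #𝓕 * m ^ s < #I ^ s) (h𝓖small : 2 * #𝓖 * m ^ t < #I ^ t) :
    ∃ B ∈ I.powersetCard m, (∀ F ∈ 𝓕, ¬F ⊆ B) ∧ ∀ G ∈ 𝓖, ¬G ⊆ B := by
  have h𝓕bad := two_mul_card_filter_exists_superset_lt hmI h𝓕 h𝓕small
  have h𝓖bad := two_mul_card_filter_exists_superset_lt hmI h𝓖 h𝓖small
  by_contra! h
  have hcover : I.powersetCard m ⊆
      {B ∈ I.powersetCard m | ∃ F ∈ 𝓕, F ⊆ B} ∪ {B ∈ I.powersetCard m | ∃ G ∈ 𝓖, G ⊆ B} := by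
    intro B hB
    by_cases hF : ∃ F ∈ 𝓕, F ⊆ B
    · exact mem_union_left _ (mem_filter.2 ⟨hB, hF⟩)
    · exact mem_union_right _ (mem_filter.2 ⟨hB, h B hB fun F hF' hFB => hF ⟨F, hF', hFB⟩⟩)
  have := (card_le_card hcover).trans (card_union_le _ _)
  rw [card_powersetCard] at this
  omega

end

/-- The number of ways to write `n = x + y` with `x ∈ A`, `y ∈ B` and `x ≤ y`. -/
def reps (A B : Finset ℕ) (n : ℕ) : ℕ := #{x ∈ A | 2 * x ≤ n ∧ n - x ∈ B}

theorem reps_union_le (A A' B : Finset ℕ) (n : ℕ) :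
    reps (A ∪ A') B n ≤ reps A B n + reps A' B n := by
  unfold reps
  rw [filter_union]
  exact card_union_le _ _

theorem ncard_le_reps {A B : Finset ℕ} {n : ℕ} {R : Set (ℕ × ℕ)}
    (hR : ∀ p ∈ R, p.1 ∈ A ∧ p.2 ∈ B ∧ p.1 ≤ p.2 ∧ p.1 + p.2 = n) : R.ncard ≤ reps A B n := by
  have hsub : R ⊆ (fun x => (x, n - x)) '' ↑{x ∈ A | 2 * x ≤ n ∧ n - x ∈ B} := by
    rintro ⟨x, y⟩ hp
    obtain ⟨hx, hy, hxy, rfl⟩ := hR _ hp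
    exact ⟨x, mem_filter.2 ⟨hx, by omega, by simpa using hy⟩, by simp⟩
  calc R.ncard ≤ _ := Set.ncard_le_ncard hsub (Set.toFinite _)
    _ ≤ _ := Set.ncard_image_le (Finset.finite_toSet _)
    _ = reps A B n := Set.ncard_coe_finset _

theorem lt_add_of_reps_pos {A B : Finset ℕ} {a b n : ℕ} (hA : A ⊆ range a) (hB : B ⊆ range b)
    (h : 0 < reps A B n) : n < a + b := by
  obtain ⟨x, hx⟩ := card_pos.1 h
  obtain ⟨hxA, -, hnxB⟩ := mem_filter.1 hx
  have := mem_range.1 (hA hxA)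
  have := mem_range.1 (hB hnxB)
  omega

theorem exists_subset_image_sub_of_lt_reps {A B : Finset ℕ} {u n : ℕ} (h : u < reps A B n) :
    ∃ X ∈ {x ∈ A | 2 * x ≤ n}.powersetCard (u + 1), X.image (n - ·) ⊆ B := by
  obtain ⟨X, hX, hcard⟩ := exists_subset_card_eq (show u + 1 ≤ reps A B n from h)
  refine ⟨X, mem_powersetCard.2 ⟨fun x hx => ?_, hcard⟩, fun y hy => ?_⟩
  · obtain ⟨hxA, hx, -⟩ := mem_filter.1 (hX hx)
    exact mem_filter.2 ⟨hxA, hx⟩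
  · obtain ⟨x, hx, rfl⟩ := mem_image.1 hy
    exact (mem_filter.1 (hX hx)).2.2

theorem card_image_sub {X : Finset ℕ} {n : ℕ} (hX : ∀ x ∈ X, 2 * x ≤ n) :
    #(X.image (n - ·)) = #X :=
  card_image_of_injOn fun x hx y hy hxy => by
    have := hX x hx
    have := hX y hy
    omega

theorem two_mul_card_le_card_union_image_sub {X : Finset ℕ} {n : ℕ} (hX : ∀ x ∈ X, 2 * x ≤ n) :
    2 * #X ≤ #(X ∪ X.image (n - ·)) + 1 := by
  -- a common element `a` of `X` and `n - X` satisfies `2 * a = n`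
  have hinter : #(X ∩ X.image (n - ·)) ≤ 1 := by
    refine card_le_one.2 fun a ha b hb => ?_
    obtain ⟨haX, x, hx, rfl⟩ := by simpa only [mem_inter, mem_image] using ha
    obtain ⟨hbX, y, hy, rfl⟩ := by simpa only [mem_inter, mem_image] using hb
    have := hX _ haX
    have := hX _ hbX
    have := hX x hx
    have := hX y hy
    omega
  have := card_union_add_card_inter X (X.image (n - ·))
  rw [card_image_sub hX] at this
  omega

def innerWitnesses (I : Finset ℕ) (u n : ℕ) : Finset (Finset ℕ) :=
  ({x ∈ I | 2 * x ≤ n}.powersetCard (u + 1)).image fun X => X ∪ X.image (n - ·)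

def crossWitnesses (P : Finset ℕ) (v n : ℕ) : Finset (Finset ℕ) :=
  ({x ∈ P | 2 * x ≤ n}.powersetCard (v + 1)).image fun X => X.image (n - ·)

theorem card_innerWitnesses_le (I : Finset ℕ) (u n : ℕ) :
    #(innerWitnesses I u n) ≤ #I ^ (u + 1) :=
  (card_image_powersetCard_le _ _ _).trans (Nat.pow_le_pow_left (card_filter_le _ _) _)

theorem card_crossWitnesses_le (P : Finset ℕ) (v n : ℕ) :
    #(crossWitnesses P v n) ≤ #P ^ (v + 1) :=
  (card_image_powersetCard_le _ _ _).trans (Nat.pow_le_pow_left (card_filter_le _ _) _)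

theorem le_card_of_mem_innerWitnesses {I F : Finset ℕ} {u n : ℕ}
    (hF : F ∈ innerWitnesses I u n) : 2 * u + 1 ≤ #F := by
  obtain ⟨X, hX, rfl⟩ := mem_image.1 hF
  obtain ⟨hXI, hcard⟩ := mem_powersetCard.1 hX
  have := two_mul_card_le_card_union_image_sub fun x hx => (mem_filter.1 (hXI hx)).2
  omega

theorem le_card_of_mem_crossWitnesses {P F : Finset ℕ} {v n : ℕ}
    (hF : F ∈ crossWitnesses P v n) : v + 1 ≤ #F := by
  obtain ⟨X, hX, rfl⟩ := mem_image.1 hF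
  obtain ⟨hXP, hcard⟩ := mem_powersetCard.1 hX
  rw [card_image_sub fun x hx => (mem_filter.1 (hXP hx)).2, hcard]

theorem exists_innerWitness_subset {I B : Finset ℕ} {u n : ℕ} (hBI : B ⊆ I)
    (h : u < reps B B n) : ∃ F ∈ innerWitnesses I u n, F ⊆ B := by
  obtain ⟨X, hX, hXB⟩ := exists_subset_image_sub_of_lt_reps h
  refine ⟨_, mem_image_of_mem _ (powersetCard_mono (filter_subset_filter _ hBI) hX),
    union_subset ?_ hXB⟩
  exact (mem_powersetCard.1 hX).1.trans (filter_subset _ _)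

theorem exists_crossWitness_subset {P B : Finset ℕ} {v n : ℕ} (h : v < reps P B n) :
    ∃ F ∈ crossWitnesses P v n, F ⊆ B := by
  obtain ⟨X, hX, hXB⟩ := exists_subset_image_sub_of_lt_reps h
  exact ⟨_, mem_image_of_mem _ hX, hXB⟩

def IsGoodBlock (N m u v : ℕ) (P B : Finset ℕ) : Prop :=
  B ⊆ Ico N (2 * N) ∧ #B = m ∧ (∀ n, reps B B n ≤ u) ∧ ∀ n, reps P B n ≤ v

theorem exists_isGoodBlock {N m u v : ℕ} {P : Finset ℕ} (hP : P ⊆ range N) (hmN : m ≤ N)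
    (hinner : 8 * N ^ (u + 2) * m ^ (2 * u + 1) < N ^ (2 * u + 1))
    (hcross : 8 * N * (#P * m) ^ (v + 1) < N ^ (v + 1)) :
    ∃ B, IsGoodBlock N m u v P B := by
  set I := Ico N (2 * N)
  have hI : #I = N := by simp only [I, Nat.card_Ico]; omega
  have hIr : I ⊆ range (2 * N) := fun x hx => mem_range.2 (mem_Ico.1 hx).2
  have hPr : P ⊆ range (2 * N) := hP.trans (range_subset_range.2 (by omega))
  set 𝓦 := (range (4 * N)).biUnion (innerWitnesses I u)
  set 𝓧 := (range (4 * N)).biUnion (crossWitnesses P v)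
  have h𝓦 : #𝓦 ≤ 4 * N * N ^ (u + 1) := by
    simpa only [card_range, hI] using
      card_biUnion_le_card_mul (range (4 * N)) _ _ fun n _ => card_innerWitnesses_le I u n
  have h𝓧 : #𝓧 ≤ 4 * N * #P ^ (v + 1) := by
    simpa only [card_range] using
      card_biUnion_le_card_mul (range (4 * N)) _ _ fun n _ => card_crossWitnesses_le P v n
  obtain ⟨B, hBI, hW, hX⟩ := exists_mem_powersetCard_forall_not_superset (𝓕 := 𝓦) (𝓖 := 𝓧)
    (hI ▸ hmN)
    (fun F hF => le_card_of_mem_innerWitnesses (mem_biUnion.1 hF).choose_spec.2)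
    (fun F hF => le_card_of_mem_crossWitnesses (mem_biUnion.1 hF).choose_spec.2)
    (calc 2 * #𝓦 * m ^ (2 * u + 1) ≤ 2 * (4 * N * N ^ (u + 1)) * m ^ (2 * u + 1) := by gcongr
      _ = 8 * N ^ (u + 2) * m ^ (2 * u + 1) := by ring
      _ < #I ^ (2 * u + 1) := hI ▸ hinner)
    (calc 2 * #𝓧 * m ^ (v + 1) ≤ 2 * (4 * N * #P ^ (v + 1)) * m ^ (v + 1) := by gcongr
      _ = 8 * N * (#P * m) ^ (v + 1) := by ring
      _ < #I ^ (v + 1) := hI ▸ hcross)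
  obtain ⟨hBsub, hBcard⟩ := mem_powersetCard.1 hBI
  refine ⟨B, hBsub, hBcard, fun n => ?_, fun n => ?_⟩
  · by_contra! hn
    have := lt_add_of_reps_pos (hBsub.trans hIr) (hBsub.trans hIr) (by omega : 0 < reps B B n)
    obtain ⟨F, hF, hFB⟩ := exists_innerWitness_subset hBsub hn
    exact hW F (mem_biUnion.2 ⟨n, mem_range.2 (by omega), hF⟩) hFB
  · by_contra! hn
    have := lt_add_of_reps_pos hPr (hBsub.trans hIr) (by omega : 0 < reps P B n)
    obtain ⟨F, hF, hFB⟩ := exists_crossWitness_subset hn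
    exact hX F (mem_biUnion.2 ⟨n, mem_range.2 (by omega), hF⟩) hFB

def blockStart (L k : ℕ) : ℕ := 2 ^ (2 * (L + 1) * (k + L))

def blockCard (L k : ℕ) : ℕ := 2 ^ (L * (k + L))

theorem blockCard_le_blockStart (L k : ℕ) : blockCard L k ≤ blockStart L k :=
  Nat.pow_le_pow_right two_pos (by nlinarith)

theorem blockStart_le_blockStart {L j k : ℕ} (hjk : j ≤ k) :
    blockStart L j ≤ blockStart L k :=
  Nat.pow_le_pow_right two_pos (by gcongr)

theorem four_mul_blockStart_le {L j k : ℕ} (hjk : j < k) :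
    4 * blockStart L j ≤ blockStart L k := by
  rw [blockStart, blockStart, show 4 = 2 ^ 2 by rfl, ← pow_add]
  exact Nat.pow_le_pow_right two_pos (by nlinarith)

theorem two_mul_blockCard_le_succ {L : ℕ} (hL : 1 ≤ L) (k : ℕ) :
    2 * blockCard L k ≤ blockCard L (k + 1) := by
  rw [blockCard, blockCard, ← pow_succ']
  exact Nat.pow_le_pow_right two_pos (by nlinarith)

theorem blockStart_inner_bound {L : ℕ} (hL : 2 ≤ L) (k : ℕ) :
    8 * blockStart L k ^ (2 * L + 2 + 2) * blockCard L k ^ (2 * (2 * L + 2) + 1) <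
      blockStart L k ^ (2 * (2 * L + 2) + 1) := by
  simp only [blockStart, blockCard, ← pow_mul, show 8 = 2 ^ 3 by rfl, ← pow_add]
  exact Nat.pow_lt_pow_right one_lt_two (by nlinarith)

theorem blockStart_cross_bound {L p : ℕ} (hL : 2 ≤ L) (k : ℕ) (hp : p ≤ blockCard L k) :
    8 * blockStart L k * (p * blockCard L k) ^ (L + 1 + 1) < blockStart L k ^ (L + 1 + 1) := by
  calc 8 * blockStart L k * (p * blockCard L k) ^ (L + 1 + 1)
      ≤ 8 * blockStart L k * (blockCard L k * blockCard L k) ^ (L + 1 + 1) := by gcongr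
    _ < blockStart L k ^ (L + 1 + 1) := by
      simp only [blockStart, blockCard, ← pow_mul, ← pow_add, show 8 = 2 ^ 3 by rfl]
      exact Nat.pow_lt_pow_right one_lt_two (by nlinarith)

noncomputable def goodBlock (L k : ℕ) (P : Finset ℕ) : Finset ℕ :=
  Classical.epsilon (IsGoodBlock (blockStart L k) (blockCard L k) (2 * L + 2) (L + 1) P)

noncomputable def blockUnion (L : ℕ) : ℕ → Finset ℕ
  | 0 => ∅
  | k + 1 => blockUnion L k ∪ goodBlock L k (blockUnion L k)

noncomputable def block (L k : ℕ) : Finset ℕ := goodBlock L k (blockUnion L k)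

def blockSet (L : ℕ) : Set ℕ := ⋃ k, (block L k : Set ℕ)

theorem blockUnion_succ (L k : ℕ) : blockUnion L (k + 1) = blockUnion L k ∪ block L k := rfl

theorem isGoodBlock_goodBlock {L k : ℕ} {P : Finset ℕ} (hL : 2 ≤ L)
    (hP : P ⊆ range (blockStart L k)) (hPcard : #P ≤ blockCard L k) :
    IsGoodBlock (blockStart L k) (blockCard L k) (2 * L + 2) (L + 1) P (goodBlock L k P) :=
  Classical.epsilon_spec <| exists_isGoodBlock hP (blockCard_le_blockStart L k)
    (blockStart_inner_bound hL k) (blockStart_cross_bound hL k hPcard)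

theorem blockUnion_subset_and_card_le {L : ℕ} (hL : 2 ≤ L) (k : ℕ) :
    blockUnion L k ⊆ range (blockStart L k) ∧ #(blockUnion L k) ≤ blockCard L k := by
  induction k with
  | zero => simp [blockUnion]
  | succ k ih =>
    obtain ⟨hBsub, hBcard, -⟩ := isGoodBlock_goodBlock hL ih.1 ih.2
    have hgap := four_mul_blockStart_le (L := L) k.lt_add_one
    refine ⟨union_subset (ih.1.trans (range_subset_range.2 (by omega))) fun x hx => ?_, ?_⟩
    · have := mem_Ico.1 (hBsub hx)
      exact mem_range.2 (by omega)
    · calc #(blockUnion L (k + 1)) ≤ #(blockUnion L k) + #(goodBlock L k (blockUnion L k)) :=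
            card_union_le _ _
        _ ≤ 2 * blockCard L k := by omega
        _ ≤ blockCard L (k + 1) := two_mul_blockCard_le_succ (by omega) k

theorem isGoodBlock_block {L : ℕ} (hL : 2 ≤ L) (k : ℕ) :
    IsGoodBlock (blockStart L k) (blockCard L k) (2 * L + 2) (L + 1) (blockUnion L k)
      (block L k) :=
  isGoodBlock_goodBlock hL (blockUnion_subset_and_card_le hL k).1
    (blockUnion_subset_and_card_le hL k).2

theorem block_subset_blockUnion {L j k : ℕ} (hjk : j < k) : block L j ⊆ blockUnion L k := by
  induction k with
  | zero => omega
  | succ k ih =>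
    rw [blockUnion_succ]
    rcases (Nat.lt_succ_iff_lt_or_eq.1 hjk) with hjk | rfl
    · exact (ih hjk).trans subset_union_left
    · exact subset_union_right

theorem mem_blockUnion_of_lt {L k x : ℕ} (hL : 2 ≤ L) (hx : x ∈ blockSet L)
    (hxk : x < blockStart L k) : x ∈ blockUnion L k := by
  obtain ⟨j, hj⟩ := Set.mem_iUnion.1 hx
  refine block_subset_blockUnion (lt_of_not_ge fun hkj => ?_) hj
  have := mem_Ico.1 ((isGoodBlock_block hL j).1 hj)
  have := blockStart_le_blockStart (L := L) hkj
  omega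

theorem eq_of_mem_block {L k k' y y' : ℕ} (hL : 2 ≤ L) (hy : y ∈ block L k)
    (hy' : y' ∈ block L k') (h : y ≤ 2 * y') (h' : y' ≤ 2 * y) : k = k' := by
  have := mem_Ico.1 ((isGoodBlock_block hL k).1 hy)
  have := mem_Ico.1 ((isGoodBlock_block hL k').1 hy')
  rcases lt_trichotomy k k' with hkk | rfl | hkk
  · have := four_mul_blockStart_le (L := L) hkk
    omega
  · rfl
  · have := four_mul_blockStart_le (L := L) hkk
    omega

theorem blockSet_subset_pos {L : ℕ} (hL : 2 ≤ L) : blockSet L ⊆ {n | 0 < n} := by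
  intro x hx
  obtain ⟨k, hk⟩ := Set.mem_iUnion.1 hx
  exact (Nat.two_pow_pos _).trans_le (mem_Ico.1 ((isGoodBlock_block hL k).1 hk)).1

theorem exists_block_forall_add_eq {L : ℕ} (hL : 2 ≤ L) (n : ℕ) :
    ∃ k, ∀ x y, x ∈ blockSet L → y ∈ blockSet L → x ≤ y → x + y = n →
      x ∈ blockUnion L (k + 1) ∧ y ∈ block L k := by
  by_cases h : ∃ x y, x ∈ blockSet L ∧ y ∈ blockSet L ∧ x ≤ y ∧ x + y = n
  · obtain ⟨x₀, y₀, -, hy₀, hxy₀, hsum₀⟩ := h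
    obtain ⟨k, hk⟩ := Set.mem_iUnion.1 hy₀
    refine ⟨k, fun x y hx hy hxy hsum => ?_⟩
    obtain ⟨k', hk'⟩ := Set.mem_iUnion.1 hy
    obtain rfl := eq_of_mem_block hL hk' hk (by omega) (by omega)
    refine ⟨mem_blockUnion_of_lt hL hx ?_, hk'⟩
    have := mem_Ico.1 ((isGoodBlock_block hL k').1 hk')
    have := four_mul_blockStart_le (L := L) k'.lt_add_one
    omega
  · exact ⟨0, fun x y hx hy hxy hsum => (h ⟨x, y, hx, hy, hxy, hsum⟩).elim⟩

theorem ncard_pairs_blockSet_le {L : ℕ} (hL : 2 ≤ L) (n : ℕ) :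
    {p : ℕ × ℕ | p.1 ∈ blockSet L ∧ p.2 ∈ blockSet L ∧ p.1 ≤ p.2 ∧ p.1 + p.2 = n}.ncard ≤
      3 * L + 3 := by
  obtain ⟨k, hk⟩ := exists_block_forall_add_eq hL n
  obtain ⟨-, -, hinner, hcross⟩ := isGoodBlock_block hL k
  calc _ ≤ reps (blockUnion L (k + 1)) (block L k) n :=
        ncard_le_reps fun p hp => by
          obtain ⟨hx, hy, hxy, hsum⟩ := hp
          exact ⟨(hk _ _ hx hy hxy hsum).1, (hk _ _ hx hy hxy hsum).2, hxy, hsum⟩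
    _ ≤ reps (blockUnion L k) (block L k) n + reps (block L k) (block L k) n :=
        reps_union_le _ _ _ _
    _ ≤ (L + 1) + (2 * L + 2) := add_le_add (hcross n) (hinner n)
    _ = 3 * L + 3 := by ring

theorem exists_le_and_lt_succ_of_strictMono {f : ℕ → ℕ} (hf : StrictMono f) {n : ℕ}
    (hn : f 0 ≤ n) : ∃ k, f k ≤ n ∧ n < f (k + 1) := by
  have hex : ∃ k, n < f k := ⟨n + 1, (Nat.lt_succ_self n).trans_le (hf.id_le _)⟩
  have h0 : Nat.find hex ≠ 0 := fun h0 => (h0 ▸ Nat.find_spec hex).not_ge hn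
  obtain ⟨k, hk⟩ := Nat.exists_eq_add_one_of_ne_zero h0
  exact ⟨k, not_lt.1 (Nat.find_min hex (by omega)), hk ▸ Nat.find_spec hex⟩

theorem rpow_lt_two_pow {n A c : ℕ} {e : ℝ} (hn : 1 ≤ n) (hnA : n ≤ 2 ^ A) (hc : 0 < c)
    (h : A * e < c) : (n : ℝ) ^ e < 2 ^ c := by
  have hn' : (1 : ℝ) ≤ n := by exact_mod_cast hn
  rcases le_or_gt 0 e with he | he
  · calc (n : ℝ) ^ e ≤ ((2 : ℝ) ^ A) ^ e := by gcongr; exact_mod_cast hnA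
      _ = 2 ^ (A * e) := by rw [← Real.rpow_natCast, ← Real.rpow_mul zero_le_two]
      _ < 2 ^ (c : ℝ) := Real.rpow_lt_rpow_of_exponent_lt one_lt_two h
      _ = 2 ^ c := Real.rpow_natCast _ _
  · calc (n : ℝ) ^ e ≤ 1 := Real.rpow_le_one_of_one_le_of_nonpos hn' he.le
      _ < 2 ^ c := one_lt_pow₀ one_lt_two hc.ne'

theorem blockCard_le_ncard_inter_Icc {L k n : ℕ} (hL : 2 ≤ L) (hkn : 2 * blockStart L k ≤ n) :
    blockCard L k ≤ (blockSet L ∩ Set.Icc 1 n).ncard := by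
  obtain ⟨hsub, hcard, -⟩ := isGoodBlock_block hL k
  rw [← hcard, ← Set.ncard_coe_finset]
  refine Set.ncard_le_ncard (fun x hx => ⟨Set.mem_iUnion.2 ⟨k, hx⟩, ?_⟩)
    ((Set.finite_Icc 1 n).subset Set.inter_subset_right)
  have := mem_Ico.1 (hsub hx)
  have : 0 < blockStart L k := Nat.two_pow_pos _
  exact ⟨by omega, by omega⟩

theorem eventually_rpow_lt_ncard_blockSet {L : ℕ} (hL : 2 ≤ L) {ε : ℝ} (hεL : 1 ≤ ε * L) :
    ∀ᶠ n : ℕ in atTop, (n : ℝ) ^ ((1 : ℝ) / 2 - ε) < ((blockSet L ∩ Set.Icc 1 n).ncard : ℝ) := by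
  have hmono : StrictMono fun k => 2 * blockStart L k := strictMono_nat_of_lt_succ fun k => by
    have := four_mul_blockStart_le (L := L) k.lt_add_one
    have : 0 < blockStart L k := Nat.two_pow_pos _
    omega
  refine eventually_atTop.2 ⟨2 * blockStart L 0, fun n hn => ?_⟩
  obtain ⟨k, hkn, hnk⟩ := exists_le_and_lt_succ_of_strictMono hmono hn
  have hnA : n ≤ 2 ^ (2 * (L + 1) * (k + 1 + L) + 1) := by
    have : n < 2 * blockStart L (k + 1) := hnk
    rw [blockStart] at this
    rw [pow_succ]
    omega
  have hn1 : 1 ≤ n := by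
    have : 0 < blockStart L k := Nat.two_pow_pos _
    omega
  refine (rpow_lt_two_pow (c := L * (k + L)) hn1 hnA (by positivity) ?_).trans_le ?_
  · -- with `j = k + L ≥ L`: `(2(L+1)(j+1)+1)(1/2 - ε) < Lj + L - j - 1/2 ≤ Lj` as `εL ≥ 1`
    have hj : (L : ℝ) ≤ k + L := by linarith [(k.cast_nonneg : (0 : ℝ) ≤ k)]
    push_cast
    nlinarith [mul_le_mul_of_nonneg_left hεL (by positivity : (0 : ℝ) ≤ 2 * (k + L + 1))]
  · exact_mod_cast blockCard_le_ncard_inter_Icc hL hkn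

end ErdosRenyi

/-- **Erdős–Rényi**: for every `ε > 0` there is `g ≥ 1` and a set `S` of positive integers
of type `B₂(g)` with `card (S ∩ {1, …, n}) > n ^ (1/2 - ε)` for all sufficiently large `n`. -/
theorem erdos_renyi_B2 (ε : ℝ) (hε : 0 < ε) :
    ∃ g : ℕ, 0 < g ∧ ∃ S : Set ℕ, S ⊆ {n | 0 < n} ∧
      (∀ n : ℕ, 0 < n →
        ({p : ℕ × ℕ | p.1 ∈ S ∧ p.2 ∈ S ∧ p.1 ≤ p.2 ∧ p.1 + p.2 = n}.ncard ≤ g)) ∧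
      (∀ᶠ n : ℕ in atTop,
        (n : ℝ) ^ ((1 : ℝ) / 2 - ε) < ((S ∩ Set.Icc 1 n).ncard : ℝ)) := by
  set L := ⌈1 / ε⌉₊ + 1
  have hL : 2 ≤ L := by
    have := Nat.ceil_pos.2 (one_div_pos.2 hε)
    omega
  have hεL : 1 ≤ ε * L := by
    calc 1 = ε * (1 / ε) := by field_simp
      _ ≤ ε * L := by
        gcongr
        exact (Nat.le_ceil _).trans (by push_cast [L]; linarith)
  exact ⟨3 * L + 3, by omega, ErdosRenyi.blockSet L, ErdosRenyi.blockSet_subset_pos hL,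
    fun n _ => ErdosRenyi.ncard_pairs_blockSet_le hL n,
    ErdosRenyi.eventually_rpow_lt_ncard_blockSet hL hεL⟩
end

section
/- Let m ≥ 2 be an integer, let s = (m−1)/m + θ with 0 < θ < 1/m, and fix signs ε₁, …, ε_m ∈ {+1, −1}. Then there is a constant C (depending only on m and s) such that for every integer n: the sum of n₁^{−s} n₂^{−s} ⋯ n_m^{−s} over all m-tuples (n₁, …, n_m) of positive integers with ε₁ n₁ + ε₂ n₂ + … + ε_m n_m = n is at most C if n = 0, and at most C · |n|^{−mθ} if n ≠ 0. -/
/-!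
Write `⟨x⟩ = 1 + |x|`. Substituting `x i = ε i * n i` removes the signs and bounds the sum by
`2 ^ (m s)` times the `m`-fold convolution power of `⟨·⟩ ^ (-s)` on `ℤ`, evaluated at `n`.
For `α, β < 1 < α + β` the convolution of `⟨·⟩ ^ (-α)` and `⟨·⟩ ^ (-β)` is `≲ ⟨·⟩ ^ (1 - α - β)`,
so the `k`-fold power is `≲ ⟨n⟩ ^ (-(k s - (k - 1)))`; the exponent stays positive up to `k = m`,
where it equals `m θ`. Everything is summed in `ℝ≥0∞`, so summability only appears at the end.
-/

open scoped ENNReal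
open Finset

lemma one_sub_mul_add_one_rpow_neg_le {α x : ℝ} (hα0 : 0 ≤ α) (hα1 : α ≤ 1) (hx : 0 ≤ x) :
    (1 - α) * (x + 1) ^ (-α) ≤ (x + 1) ^ (1 - α) - x ^ (1 - α) := by
  have hx1 : 0 < x + 1 := by linarith
  have bernoulli := rpow_one_add_le_one_add_mul_self (s := -(x + 1)⁻¹)
    (by rw [neg_le_neg_iff]; exact inv_le_one_of_one_le₀ (by linarith)) (p := 1 - α)
    (by linarith) (by linarith)
  have hquot : 1 + -(x + 1)⁻¹ = x / (x + 1) := by field_simp; ring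
  rw [hquot, Real.div_rpow hx hx1.le, div_le_iff₀ (by positivity)] at bernoulli
  have hpow : (x + 1) ^ (1 - α) = (x + 1) ^ (-α) * (x + 1) := by
    rw [sub_eq_neg_add, Real.rpow_add hx1, Real.rpow_one]
  rw [hpow] at bernoulli ⊢
  have expand : (1 + (1 - α) * -(x + 1)⁻¹) * ((x + 1) ^ (-α) * (x + 1))
      = (x + 1) ^ (-α) * (x + 1) - (1 - α) * (x + 1) ^ (-α) := by
    field_simp
    ring
  linarith

lemma sum_range_add_one_rpow_neg_le {α : ℝ} (hα0 : 0 ≤ α) (hα1 : α < 1) (D : ℕ) :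
    ∑ k ∈ range D, ((k : ℝ) + 1) ^ (-α) ≤ (1 - α)⁻¹ * (D : ℝ) ^ (1 - α) := by
  rw [← div_eq_inv_mul, le_div_iff₀ (by linarith), sum_mul]
  calc ∑ k ∈ range D, ((k : ℝ) + 1) ^ (-α) * (1 - α)
      ≤ ∑ k ∈ range D, (((k + 1 : ℕ) : ℝ) ^ (1 - α) - (k : ℝ) ^ (1 - α)) := by
        gcongr with k
        push_cast
        rw [mul_comm]
        exact one_sub_mul_add_one_rpow_neg_le hα0 hα1.le k.cast_nonneg
    _ = (D : ℝ) ^ (1 - α) := by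
        rw [sum_range_sub (fun k : ℕ => (k : ℝ) ^ (1 - α))]
        simp [Real.zero_rpow (by linarith : (1 : ℝ) - α ≠ 0)]

lemma tsum_nat_add_rpow_neg_le {γ : ℝ} (hγ : 1 < γ) {D : ℕ} (hD : 1 ≤ D) :
    ∑' k : ℕ, ((k + D + 1 : ℕ) : ℝ) ^ (-γ) ≤ (γ - 1)⁻¹ * (D : ℝ) ^ (1 - γ) := by
  have hD0 : (0 : ℝ) < D := by exact_mod_cast hD
  have anti : AntitoneOn (fun x : ℝ => x ^ (-γ)) (Set.Ici (D : ℝ)) := fun x hx y _ hxy =>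
    Real.rpow_le_rpow_of_nonpos (hD0.trans_le hx) hxy (by linarith)
  refine (anti.tsum_comp_add_le_integral D (integrableOn_Ioi_rpow_of_lt (by linarith) hD0)
    fun x hx => Real.rpow_nonneg (hD0.trans hx).le _).trans_eq ?_
  rw [integral_Ioi_rpow_of_lt (by linarith) hD0, neg_div, ← div_neg, div_eq_inv_mul]
  ring_nf

lemma natCast_add_one_rpow_eq_ofReal (k : ℕ) (x : ℝ) :
    ((k + 1 : ℕ) : ℝ≥0∞) ^ x = ENNReal.ofReal (((k : ℝ) + 1) ^ x) := by
  rw [← ENNReal.ofReal_natCast, ENNReal.ofReal_rpow_of_pos (by positivity)]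
  push_cast
  rfl

lemma ENNReal.rpow_neg_le_rpow_neg {x y : ℝ≥0∞} {β : ℝ} (hβ : 0 ≤ β) (h : x ≤ y) :
    y ^ (-β) ≤ x ^ (-β) := by
  simpa only [ENNReal.rpow_neg] using ENNReal.inv_le_inv.2 (ENNReal.rpow_le_rpow h hβ)

lemma ENNReal.rpow_neg_le_two_rpow_mul {x y : ℝ≥0∞} {β : ℝ} (hβ : 0 ≤ β) (hx : x ≠ ⊤)
    (h : y ≤ 2 * x) : x ^ (-β) ≤ 2 ^ β * y ^ (-β) := by
  have h2 : (2 : ℝ≥0∞) ^ β * 2 ^ (-β) = 1 := by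
    rw [← ENNReal.rpow_add _ _ two_ne_zero ENNReal.ofNat_ne_top, add_neg_cancel,
      ENNReal.rpow_zero]
  calc x ^ (-β) = 2 ^ β * (2 * x) ^ (-β) := by
        rw [ENNReal.mul_rpow_of_ne_top ENNReal.ofNat_ne_top hx, ← mul_assoc, h2, one_mul]
    _ ≤ 2 ^ β * y ^ (-β) := mul_le_mul_right (ENNReal.rpow_neg_le_rpow_neg hβ h) _

lemma tsum_int_natAbs_le (g : ℕ → ℝ≥0∞) : ∑' b : ℤ, g b.natAbs ≤ 2 * ∑' k, g k := by
  rw [tsum_of_nat_of_neg_add_one ENNReal.summable ENNReal.summable, two_mul]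
  refine add_le_add le_rfl ?_
  have : ∀ k : ℕ, (-((k : ℤ) + 1)).natAbs = k + 1 := fun k => by omega
  simp only [this]
  exact ENNReal.tsum_comp_le_tsum_of_injective (add_left_injective 1) g

lemma summable_and_tsum_le_of_tsum_ofReal_le {ι : Type*} {F : ι → ℝ} (hF : ∀ i, 0 ≤ F i)
    {c : ℝ≥0∞} (hc : c ≠ ⊤) (h : ∑' i, ENNReal.ofReal (F i) ≤ c) :
    Summable F ∧ ∑' i, F i ≤ c.toReal := by
  have hsum : Summable F := by
    simpa [ENNReal.toReal_ofReal (hF _)] using ENNReal.summable_toReal (ne_top_of_le_ne_top hc h)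
  refine ⟨hsum, ?_⟩
  rw [← ENNReal.toReal_ofReal (tsum_nonneg hF), ENNReal.ofReal_tsum_of_nonneg hF hsum]
  exact ENNReal.toReal_mono hc h

namespace SignedRepresentation

-- `(1 + |b|) ^ (-α)`: comparable to `|b| ^ (-α)` for `b ≠ 0`, and finite at `0`.
noncomputable def weight (α : ℝ) (b : ℤ) : ℝ≥0∞ := ((b.natAbs + 1 : ℕ) : ℝ≥0∞) ^ (-α)

lemma tsum_weight_natAbs_lt_le {α : ℝ} (hα0 : 0 ≤ α) (hα1 : α < 1) (D : ℕ) :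
    ∑' b : ℤ, (if b.natAbs < D then weight α b else 0)
      ≤ 2 * ENNReal.ofReal (1 - α)⁻¹ * (D : ℝ≥0∞) ^ (1 - α) := by
  refine (tsum_int_natAbs_le fun k => if k < D then ((k + 1 : ℕ) : ℝ≥0∞) ^ (-α) else 0).trans ?_
  rw [mul_assoc, tsum_eq_sum (s := range D) fun k hk => if_neg (by simpa using hk)]
  gcongr
  calc ∑ k ∈ range D, (if k < D then ((k + 1 : ℕ) : ℝ≥0∞) ^ (-α) else 0)
      = ENNReal.ofReal (∑ k ∈ range D, ((k : ℝ) + 1) ^ (-α)) := by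
        rw [ENNReal.ofReal_sum_of_nonneg fun k _ => by positivity]
        refine sum_congr rfl fun k hk => ?_
        rw [if_pos (mem_range.1 hk), natCast_add_one_rpow_eq_ofReal]
    _ ≤ ENNReal.ofReal ((1 - α)⁻¹ * (D : ℝ) ^ (1 - α)) :=
        ENNReal.ofReal_le_ofReal (sum_range_add_one_rpow_neg_le hα0 hα1 D)
    _ = _ := by
        rw [ENNReal.ofReal_mul (by linarith [inv_pos.2 (sub_pos.2 hα1)]),
          ← ENNReal.ofReal_rpow_of_nonneg D.cast_nonneg (by linarith), ENNReal.ofReal_natCast]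

lemma tsum_weight_le_natAbs_le {γ : ℝ} (hγ : 1 < γ) {D : ℕ} (hD : 1 ≤ D) :
    ∑' b : ℤ, (if D ≤ b.natAbs then weight γ b else 0)
      ≤ 2 * ENNReal.ofReal (γ - 1)⁻¹ * (D : ℝ≥0∞) ^ (1 - γ) := by
  refine (tsum_int_natAbs_le fun k => if D ≤ k then ((k + 1 : ℕ) : ℝ≥0∞) ^ (-γ) else 0).trans ?_
  rw [mul_assoc, ← ENNReal.summable.sum_add_tsum_nat_add' (k := D),
    sum_eq_zero fun k hk => if_neg (by simpa using hk), zero_add]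
  gcongr
  calc ∑' k : ℕ, (if D ≤ k + D then ((k + D + 1 : ℕ) : ℝ≥0∞) ^ (-γ) else 0)
      = ENNReal.ofReal (∑' k : ℕ, ((k + D + 1 : ℕ) : ℝ) ^ (-γ)) := by
        rw [ENNReal.ofReal_tsum_of_nonneg (fun k => by positivity)]
        · refine tsum_congr fun k => ?_
          rw [if_pos (by omega), natCast_add_one_rpow_eq_ofReal]
          push_cast
          rfl
        · simpa only [Nat.cast_add, add_assoc] using
            (summable_nat_add_iff (D + 1)).2 (Real.summable_nat_rpow.2 (by linarith : -γ < -1))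
    _ ≤ ENNReal.ofReal ((γ - 1)⁻¹ * (D : ℝ) ^ (1 - γ)) :=
        ENNReal.ofReal_le_ofReal (tsum_nat_add_rpow_neg_le hγ hD)
    _ = _ := by
        rw [ENNReal.ofReal_mul (by linarith [inv_pos.2 (sub_pos.2 hγ)]),
          ← ENNReal.ofReal_rpow_of_pos (by exact_mod_cast hD), ENNReal.ofReal_natCast]

lemma weight_ne_top (α : ℝ) (b : ℤ) : weight α b ≠ ⊤ :=
  ENNReal.rpow_ne_top_of_nonneg' (by positivity) (by simp)

lemma weight_le_weight {β : ℝ} (hβ : 0 ≤ β) {a b : ℤ} (h : a.natAbs ≤ b.natAbs) :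
    weight β b ≤ weight β a :=
  ENNReal.rpow_neg_le_rpow_neg hβ (by gcongr)

lemma weight_mul_weight (α β : ℝ) (b : ℤ) : weight α b * weight β b = weight (α + β) b := by
  rw [weight, weight, weight, ← ENNReal.rpow_add _ _ (by positivity) (by simp), neg_add]

-- If `|b| ≤ |d - b|` then `⟨d - b⟩ ≥ ⟨d⟩ / 2`, and even `⟨d - b⟩ ≥ ⟨b⟩ > ⟨d⟩` for large `b`:
-- the sum splits into a partial sum and a tail of `p`-series.
lemma tsum_ite_weight_mul_weight_sub_le {α β : ℝ} (hα0 : 0 ≤ α) (hα1 : α < 1)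
    (hαβ : 1 < α + β) (d : ℤ) :
    ∑' b : ℤ, (if b.natAbs ≤ (d - b).natAbs then weight α b * weight β (d - b) else 0)
      ≤ (2 ^ β * 2 * ENNReal.ofReal (1 - α)⁻¹ + 2 * ENNReal.ofReal (α + β - 1)⁻¹)
        * weight (α + β - 1) d := by
  have hβ : 0 ≤ β := by linarith
  set D : ℕ := d.natAbs + 1 with hD
  have hD0 : (D : ℝ≥0∞) ≠ 0 := by simp [hD]
  have pointwise : ∀ b : ℤ,
      (if b.natAbs ≤ (d - b).natAbs then weight α b * weight β (d - b) else 0)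
        ≤ 2 ^ β * (D : ℝ≥0∞) ^ (-β) * (if b.natAbs < D then weight α b else 0)
          + (if D ≤ b.natAbs then weight (α + β) b else 0) := by
    intro b
    by_cases hb : b.natAbs ≤ (d - b).natAbs
    swap
    · rw [if_neg hb]
      exact zero_le
    rw [if_pos hb]
    rcases lt_or_ge b.natAbs D with hlt | hge
    · rw [if_pos hlt, if_neg (by omega), add_zero, mul_comm]
      gcongr
      refine ENNReal.rpow_neg_le_two_rpow_mul hβ (by simp) ?_
      exact_mod_cast (by omega : D ≤ 2 * ((d - b).natAbs + 1))
    · rw [if_neg (by omega), if_pos hge, mul_zero, zero_add, ← weight_mul_weight]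
      gcongr
      exact weight_le_weight hβ hb
  have hrpow : ∀ x : ℝ, (D : ℝ≥0∞) ^ (-β) * (D : ℝ≥0∞) ^ x = (D : ℝ≥0∞) ^ (x - β) := fun x => by
    rw [← ENNReal.rpow_add _ _ hD0 (by simp), neg_add_eq_sub]
  have hweight : weight (α + β - 1) d = (D : ℝ≥0∞) ^ (1 - α - β) := by
    rw [weight, ← hD]; ring_nf
  calc ∑' b : ℤ, (if b.natAbs ≤ (d - b).natAbs then weight α b * weight β (d - b) else 0)
      ≤ ∑' b : ℤ, (2 ^ β * (D : ℝ≥0∞) ^ (-β) * (if b.natAbs < D then weight α b else 0)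
          + (if D ≤ b.natAbs then weight (α + β) b else 0)) := ENNReal.tsum_le_tsum pointwise
    _ = 2 ^ β * (D : ℝ≥0∞) ^ (-β) * ∑' b : ℤ, (if b.natAbs < D then weight α b else 0)
          + ∑' b : ℤ, (if D ≤ b.natAbs then weight (α + β) b else 0) := by
        rw [ENNReal.tsum_add, ENNReal.tsum_mul_left]
    _ ≤ 2 ^ β * (D : ℝ≥0∞) ^ (-β) * (2 * ENNReal.ofReal (1 - α)⁻¹ * (D : ℝ≥0∞) ^ (1 - α))
          + 2 * ENNReal.ofReal (α + β - 1)⁻¹ * (D : ℝ≥0∞) ^ (1 - (α + β)) := by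
        gcongr
        · exact tsum_weight_natAbs_lt_le hα0 hα1 D
        · exact tsum_weight_le_natAbs_le hαβ (by omega)
    _ = 2 ^ β * 2 * ENNReal.ofReal (1 - α)⁻¹ * ((D : ℝ≥0∞) ^ (-β) * (D : ℝ≥0∞) ^ (1 - α))
          + 2 * ENNReal.ofReal (α + β - 1)⁻¹ * (D : ℝ≥0∞) ^ (1 - (α + β)) := by ring
    _ = _ := by rw [hrpow, hweight, ← sub_sub, add_mul]

lemma exists_tsum_weight_mul_weight_sub_le {α β : ℝ} (hα : α < 1) (hβ : β < 1)
    (hαβ : 1 < α + β) :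
    ∃ K : ℝ≥0∞, K ≠ ⊤ ∧ ∀ d : ℤ,
      ∑' b : ℤ, weight α b * weight β (d - b) ≤ K * weight (α + β - 1) d := by
  refine ⟨(2 ^ β * 2 * ENNReal.ofReal (1 - α)⁻¹ + 2 * ENNReal.ofReal (α + β - 1)⁻¹)
    + (2 ^ α * 2 * ENNReal.ofReal (1 - β)⁻¹ + 2 * ENNReal.ofReal (β + α - 1)⁻¹), ?_, fun d => ?_⟩
  · finiteness
  set F : ℝ → ℝ → ℤ → ℝ≥0∞ := fun α β b =>
    if b.natAbs ≤ (d - b).natAbs then weight α b * weight β (d - b) else 0 with hF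
  have split : ∀ b, weight α b * weight β (d - b) ≤ F α β b + F β α (d - b) := by
    intro b
    simp only [hF, sub_sub_cancel]
    rcases le_total b.natAbs (d - b).natAbs with h | h
    · rw [if_pos h]; exact le_self_add
    · rw [if_pos h, mul_comm]; exact le_add_self
  calc ∑' b : ℤ, weight α b * weight β (d - b)
      ≤ ∑' b : ℤ, F α β b + ∑' b : ℤ, F β α (d - b) := by
        rw [← ENNReal.tsum_add]; exact ENNReal.tsum_le_tsum split
    _ = ∑' b : ℤ, F α β b + ∑' b : ℤ, F β α b := congrArg _ ((Equiv.subLeft d).tsum_eq (F β α))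
    _ ≤ _ := by
        rw [add_mul]
        gcongr
        · exact tsum_ite_weight_mul_weight_sub_le (by linarith) hα hαβ d
        · rw [add_comm α β]
          exact tsum_ite_weight_mul_weight_sub_le (by linarith) hβ (by linarith) d

noncomputable def weightConvPow (α : ℝ) (k : ℕ) (n : ℤ) : ℝ≥0∞ :=
  ∑' x : Fin k → ℤ, if ∑ i, x i = n then ∏ i, weight α (x i) else 0

lemma weightConvPow_one (α : ℝ) (n : ℤ) : weightConvPow α 1 n = weight α n := by
  rw [weightConvPow, ← (Equiv.funUnique (Fin 1) ℤ).symm.tsum_eq]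
  simp only [Equiv.funUnique_symm_apply, univ_unique, Fin.default_eq_zero, sum_singleton,
    prod_singleton, uniqueElim_const]
  exact tsum_ite_eq n (weight α)

lemma weightConvPow_succ (α : ℝ) (k : ℕ) (n : ℤ) :
    weightConvPow α (k + 1) n = ∑' b : ℤ, weight α b * weightConvPow α k (n - b) := by
  rw [weightConvPow, ← (Fin.consEquiv fun _ => ℤ).tsum_eq, ENNReal.tsum_prod']
  refine tsum_congr fun b => ?_
  rw [weightConvPow, ← ENNReal.tsum_mul_left]
  refine tsum_congr fun x => ?_
  simp only [Fin.consEquiv_apply, Fin.sum_univ_succ, Fin.prod_univ_succ, Fin.cons_zero,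
    Fin.cons_succ, mul_ite, mul_zero, eq_sub_iff_add_eq']

lemma exists_weightConvPow_le {s : ℝ} (hs : s < 1) {k : ℕ} (hk : 1 ≤ k)
    (hks : 0 < k * s - (k - 1)) :
    ∃ K : ℝ≥0∞, K ≠ ⊤ ∧ ∀ n : ℤ, weightConvPow s k n ≤ K * weight (k * s - (k - 1)) n := by
  induction k, hk using Nat.le_induction with
  | base => exact ⟨1, ENNReal.one_ne_top, fun n => by simp [weightConvPow_one]⟩
  | succ k hk ih =>
    push_cast at hks ⊢
    have hk1 : (1 : ℝ) ≤ k := by exact_mod_cast hk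
    obtain ⟨K, hK, hbound⟩ := ih (by linarith)
    obtain ⟨K', hK', hconv⟩ := exists_tsum_weight_mul_weight_sub_le
      (α := s) (β := k * s - (k - 1)) hs (by nlinarith) (by linarith)
    refine ⟨K * K', ENNReal.mul_ne_top hK hK', fun n => ?_⟩
    calc weightConvPow s (k + 1) n
        = ∑' b : ℤ, weight s b * weightConvPow s k (n - b) := weightConvPow_succ s k n
      _ ≤ ∑' b : ℤ, weight s b * (K * weight (k * s - (k - 1)) (n - b)) := by
          gcongr with b; exact hbound _
      _ = K * ∑' b : ℤ, weight s b * weight (k * s - (k - 1)) (n - b) := by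
          rw [← ENNReal.tsum_mul_left]; exact tsum_congr fun b => by ring
      _ ≤ K * (K' * weight (s + (k * s - (k - 1)) - 1) n) := by gcongr; exact hconv n
      _ = K * K' * weight ((k + 1) * s - (k + 1 - 1)) n := by rw [← mul_assoc]; ring_nf

-- The tuples embed into `ℤ ^ m` via `f ↦ (ε i * f i)`, and `f ^ (-s) ≤ 2 ^ s * (f + 1) ^ (-s)`.
lemma tsum_signed_representation_le {m : ℕ} {s : ℝ} (hs : 0 ≤ s) {ε : Fin m → ℤ}
    (hε : ∀ i, ε i = 1 ∨ ε i = -1) (n : ℤ) :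
    ∑' f : {f : Fin m → ℕ // (∀ i, 0 < f i) ∧ ∑ i, ε i * (f i : ℤ) = n},
        ENNReal.ofReal (∏ i, ((f : Fin m → ℕ) i : ℝ) ^ (-s))
      ≤ (2 ^ s) ^ m * weightConvPow s m n := by
  have hεabs : ∀ i, (ε i).natAbs = 1 := fun i => by rcases hε i with h | h <;> simp [h]
  set φ : {f : Fin m → ℕ // (∀ i, 0 < f i) ∧ ∑ i, ε i * (f i : ℤ) = n} → Fin m → ℤ :=
    fun f i => ε i * (f.1 i : ℤ)
  have hφ : Function.Injective φ := by
    intro f g hfg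
    ext i
    have hε0 : ε i ≠ 0 := by simp [← Int.natAbs_ne_zero, hεabs]
    exact_mod_cast mul_left_cancel₀ hε0 (congrFun hfg i)
  rw [weightConvPow, ← ENNReal.tsum_mul_left]
  refine le_trans (ENNReal.tsum_le_tsum fun f => ?_)
    (ENNReal.tsum_comp_le_tsum_of_injective hφ _)
  have hconst : ((2 : ℝ≥0∞) ^ s) ^ m = ∏ _i : Fin m, (2 : ℝ≥0∞) ^ s := by simp
  rw [if_pos f.2.2, ENNReal.ofReal_prod_of_nonneg fun i _ => by positivity, hconst,
    ← prod_mul_distrib]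
  refine prod_le_prod' fun i _ => ?_
  have hfi := f.2.1 i
  rw [← ENNReal.ofReal_rpow_of_pos (by exact_mod_cast hfi), ENNReal.ofReal_natCast]
  refine ENNReal.rpow_neg_le_two_rpow_mul hs (by simp) ?_
  have : (φ f i).natAbs = f.1 i := by simp [φ, Int.natAbs_mul, hεabs]
  rw [this]
  exact_mod_cast (by omega : f.1 i + 1 ≤ 2 * f.1 i)

lemma toReal_weight_le {α : ℝ} (hα : 0 ≤ α) (n : ℤ) :
    (weight α n).toReal ≤ if n = 0 then 1 else |(n : ℝ)| ^ (-α) := by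
  rw [weight, ← ENNReal.toReal_rpow, ENNReal.toReal_natCast]
  split_ifs with hn
  · simp [hn]
  · push_cast
    rw [Nat.cast_natAbs, Int.cast_abs]
    exact Real.rpow_le_rpow_of_nonpos (by positivity) (by linarith) (by linarith)

end SignedRepresentation

/-- Let `m ≥ 2`, `s = (m-1)/m + θ` with `0 < θ < 1/m`, and fix signs `ε i ∈ {±1}`. Then there
is a constant `C > 0` (depending only on `m` and `s`) such that for every integer `n` the sum of
`∏ i, (n i) ^ (-s)` over all `m`-tuples of positive integers with `∑ i, ε i * n i = n` is
(summable and) at most `C` if `n = 0`, and at most `C * |n| ^ (-mθ)` if `n ≠ 0`. -/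
theorem signed_representation_sum_bound (m : ℕ) (hm : 2 ≤ m) (θ s : ℝ)
    (hθ₀ : 0 < θ) (hθ₁ : θ < 1 / m) (hs : s = (m - 1 : ℝ) / m + θ)
    (ε : Fin m → ℤ) (hε : ∀ i, ε i = 1 ∨ ε i = -1) :
    ∃ C : ℝ, 0 < C ∧ ∀ n : ℤ,
      Summable (fun f : {f : Fin m → ℕ // (∀ i, 0 < f i) ∧ ∑ i, ε i * (f i : ℤ) = n} =>
        ∏ i, ((f : Fin m → ℕ) i : ℝ) ^ (-s)) ∧
      ∑' f : {f : Fin m → ℕ // (∀ i, 0 < f i) ∧ ∑ i, ε i * (f i : ℤ) = n},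
          ∏ i, ((f : Fin m → ℕ) i : ℝ) ^ (-s) ≤
        if n = 0 then C else C * (|n| : ℝ) ^ (-(m * θ)) := by
  have hm1 : (1 : ℝ) ≤ m := by exact_mod_cast (by omega : 1 ≤ m)
  have hs0 : 0 ≤ s := by rw [hs]; have := sub_nonneg.2 hm1; positivity
  have hs1 : s < 1 := by
    rw [hs, sub_div, div_self (by positivity)]
    linarith [(one_div (m : ℝ)) ▸ hθ₁]
  have hexp : (m : ℝ) * s - (m - 1) = m * θ := by rw [hs]; field_simp; ring
  have hmθ : 0 < (m : ℝ) * θ := by positivity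
  obtain ⟨K, hK, hconv⟩ :=
    SignedRepresentation.exists_weightConvPow_le hs1 (by omega : 1 ≤ m) (hexp ▸ hmθ)
  rw [hexp] at hconv
  set c : ℝ≥0∞ := (2 ^ s) ^ m * K
  have hc : c ≠ ⊤ := by finiteness
  refine ⟨c.toReal + 1, by positivity, fun n => ?_⟩
  have hle := (SignedRepresentation.tsum_signed_representation_le hs0 hε n).trans
    ((mul_le_mul_right (hconv n) _).trans_eq (mul_assoc _ _ _).symm)
  obtain ⟨hsummable, htsum⟩ := summable_and_tsum_le_of_tsum_ofReal_le (fun f => by positivity)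
    (ENNReal.mul_ne_top hc (SignedRepresentation.weight_ne_top _ n)) hle
  refine ⟨hsummable, htsum.trans ?_⟩
  rw [ENNReal.toReal_mul]
  refine (mul_le_mul_of_nonneg_left (SignedRepresentation.toReal_weight_le hmθ.le n)
    ENNReal.toReal_nonneg).trans ?_
  split_ifs
  · linarith
  · exact mul_le_mul_of_nonneg_right (by linarith) (by positivity)
end

section
/- Let s = 1/2 + θ with 0 < θ < 1/2. For every ε > 0 there exist a constant K and a measurable set Ω₂ ⊆ Ω with P(Ω₂) ≥ 1 − ε such that for every ω ∈ Ω₂ and every N ∈ ℤ, r^{(2)}_N(ω) < K. -/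
open MeasureTheory

/-- The set of representations of the integer `N` as a combination of sums and differences of
`m` distinct elements of `E ⊆ ℕ`: pairs `(A, B)` of disjoint finite subsets of `E` with
`|A| + |B| = m` and `(∑ a ∈ A, a) - (∑ b ∈ B, b) = N`. -/
def repSet (m : ℕ) (E : Set ℕ) (N : ℤ) : Set (Finset ℕ × Finset ℕ) :=
  {p | ↑p.1 ⊆ E ∧ ↑p.2 ⊆ E ∧ Disjoint p.1 p.2 ∧ p.1.card + p.2.card = m ∧
    (∑ a ∈ p.1, (a : ℤ)) - ∑ b ∈ p.2, (b : ℤ) = N}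

/-!
Fix `k` with `θ k > 1` and let `W(ω)` count the `k`-tuples of representations of a common
integer `N` whose supports are pairwise disjoint and contained in `E(ω)`. By independence such a
tuple occurs with probability `∏ⱼ w(pⱼ)`, where `w(p) = ∏_{i ∈ A ∪ B} i^{-s}`. For a
representation of `N` with support `x < y` one has `2 y ≥ |N|`, hence
`w(p) ≤ x^{-1-θ} (|N|/2)^{-θ}`; as `x` lies in the support of at most four representations of
`N`, the total weight of the representations of `N` is `O(|N|^{-θ})`. Therefore
`E W ≤ ∑_N O(|N|^{-θ k}) < ∞`, and by Markov's inequality `W < T` off an event of probability at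
most `ε`. Conversely, a representation of `N` meets the supports of at most eight representations
of `N`, so among `8 m` of them a greedy choice finds `m` with pairwise disjoint supports; for
`m = T + k` their injective `k`-tuples already give `W ≥ T + 1`.
-/

open Function ProbabilityTheory
open scoped ENNReal

theorem Finset.exists_subset_pairwiseDisjoint_card_le_mul {α β : Type*} [DecidableEq α]
    [DecidableEq β] {f : α → Finset β} {d : ℕ} (S : Finset α) (hne : ∀ p ∈ S, (f p).Nonempty)
    (hdeg : ∀ p ∈ S, (S.filter fun q => ¬Disjoint (f q) (f p)).card ≤ d) :
    ∃ D ⊆ S, (D : Set α).PairwiseDisjoint f ∧ S.card ≤ d * D.card := by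
  induction S using Finset.strongInduction with
  | H S ih =>
  rcases S.eq_empty_or_nonempty with rfl | ⟨p, hp⟩
  · exact ⟨∅, Finset.empty_subset _, by simp, by simp⟩
  set S' := S.filter fun q => Disjoint (f q) (f p)
  have hS' : S' ⊆ S := Finset.filter_subset _ S
  have hpS' : p ∉ S' := fun h => (hne p hp).ne_empty (disjoint_self.mp (Finset.mem_filter.mp h).2)
  obtain ⟨D, hDS', hD, hcard⟩ := ih S' ((Finset.ssubset_iff_of_subset hS').mpr ⟨p, hp, hpS'⟩)
    (fun q hq => hne q (hS' hq))
    (fun q hq => (Finset.card_le_card (Finset.filter_subset_filter _ hS')).trans (hdeg q (hS' hq)))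
  refine ⟨insert p D, Finset.insert_subset hp (hDS'.trans hS'), ?_, ?_⟩
  · rw [Finset.coe_insert]
    exact hD.insert fun q hq _ => (Finset.mem_filter.mp (hDS' hq)).2.symm
  · have hsplit : S'.card + (S.filter fun q => ¬Disjoint (f q) (f p)).card = S.card :=
      Finset.card_filter_add_card_filter_not _
    have := hdeg p hp
    rw [Finset.card_insert_of_notMem fun h => hpS' (hDS' h), Nat.mul_succ]
    omega

def repSupport (p : Finset ℕ × Finset ℕ) : Finset ℕ := p.1 ∪ p.2

section Combinatorics

variable {E : Set ℕ} {N : ℤ} {p : Finset ℕ × Finset ℕ}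

lemma repSet_mono {m : ℕ} {F : Set ℕ} (h : E ⊆ F) : repSet m E N ⊆ repSet m F N :=
  fun _ ⟨h1, h2, hrest⟩ => ⟨h1.trans h, h2.trans h, hrest⟩

lemma repSupport_subset_of_mem_repSet {m : ℕ} (hp : p ∈ repSet m E N) : ↑(repSupport p) ⊆ E := by
  rw [repSupport, Finset.coe_union]
  exact Set.union_subset hp.1 hp.2.1

lemma mem_repSet_two (hp : p ∈ repSet 2 E N) :
    ∃ a b : ℕ, a ≠ b ∧ (p = ({a, b}, ∅) ∧ N = a + b ∨ p = ({a}, {b}) ∧ N = a - b ∨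
      p = (∅, {a, b}) ∧ N = -(a + b)) := by
  obtain ⟨A, B⟩ := p
  obtain ⟨-, -, hdisj, hcard, hN⟩ : _ ∧ _ ∧ Disjoint A B ∧ A.card + B.card = 2 ∧ _ := hp
  rcases (by omega : A.card = 2 ∧ B.card = 0 ∨ A.card = 1 ∧ B.card = 1 ∨
    A.card = 0 ∧ B.card = 2) with ⟨hA, hB⟩ | ⟨hA, hB⟩ | ⟨hA, hB⟩
  · obtain ⟨a, b, hab, rfl⟩ := Finset.card_eq_two.mp hA
    obtain rfl := Finset.card_eq_zero.mp hB
    exact ⟨a, b, hab, Or.inl ⟨rfl, by simpa [Finset.sum_pair hab] using hN.symm⟩⟩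
  · obtain ⟨a, rfl⟩ := Finset.card_eq_one.mp hA
    obtain ⟨b, rfl⟩ := Finset.card_eq_one.mp hB
    exact ⟨a, b, by simpa using hdisj, Or.inr (Or.inl ⟨rfl, by simpa using hN.symm⟩)⟩
  · obtain rfl := Finset.card_eq_zero.mp hA
    obtain ⟨a, b, hab, rfl⟩ := Finset.card_eq_two.mp hB
    refine ⟨a, b, hab, Or.inr (Or.inr ⟨rfl, ?_⟩)⟩
    simp only [Finset.sum_empty, Finset.sum_pair hab] at hN
    omega

lemma card_repSupport (hp : p ∈ repSet 2 E N) : (repSupport p).card = 2 := by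
  obtain ⟨a, b, hab, h⟩ := mem_repSet_two hp
  rcases h with ⟨rfl, -⟩ | ⟨rfl, -⟩ | ⟨rfl, -⟩ <;> simp [repSupport, Finset.card_pair hab]

lemma exists_repSupport_eq_pair (hp : p ∈ repSet 2 E N) :
    ∃ x y : ℕ, x < y ∧ repSupport p = {x, y} ∧ N ≠ 0 ∧ N.natAbs ≤ 2 * y := by
  obtain ⟨a, b, hab, h⟩ := mem_repSet_two hp
  rcases hab.lt_or_gt with hlt | hlt <;>
  rcases h with ⟨rfl, rfl⟩ | ⟨rfl, rfl⟩ | ⟨rfl, rfl⟩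
  all_goals first
    | exact ⟨a, b, hlt, by simp [repSupport], by omega, by omega⟩
    | exact ⟨b, a, hlt, by simp [repSupport, Finset.pair_comm], by omega, by omega⟩

/-- Once `i` and the signs are fixed, `N` determines the other element of a representation of `N`
whose support contains `i`. -/
def repCandidates (N : ℤ) (i : ℕ) : Finset (Finset ℕ × Finset ℕ) :=
  {({i, (N - i).toNat}, ∅), ({i}, {(i - N).toNat}), ({(N + i).toNat}, {i}),
    (∅, {i, (-N - i).toNat})}

lemma card_repCandidates_le (N : ℤ) (i : ℕ) : (repCandidates N i).card ≤ 4 :=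
  Finset.card_le_four

lemma mem_repCandidates {i : ℕ} (hp : p ∈ repSet 2 E N) (hi : i ∈ repSupport p) :
    p ∈ repCandidates N i := by
  obtain ⟨a, b, -, h⟩ := mem_repSet_two hp
  rcases h with ⟨rfl, rfl⟩ | ⟨rfl, rfl⟩ | ⟨rfl, rfl⟩ <;>
  simp only [repSupport, Finset.union_empty, Finset.empty_union, Finset.mem_union,
    Finset.mem_insert, Finset.mem_singleton] at hi <;>
  rcases hi with rfl | rfl <;> simp [repCandidates, Finset.pair_comm]

lemma card_filter_not_disjoint_repSupport_le {S : Finset (Finset ℕ × Finset ℕ)}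
    (hS : ↑S ⊆ repSet 2 E N) {p : Finset ℕ × Finset ℕ} (hp : p ∈ repSet 2 E N) :
    (S.filter fun q => ¬Disjoint (repSupport q) (repSupport p)).card ≤ 8 := by
  have hsub : (S.filter fun q => ¬Disjoint (repSupport q) (repSupport p)) ⊆
      (repSupport p).biUnion (repCandidates N) := by
    intro q hq
    obtain ⟨hqS, hqp⟩ := Finset.mem_filter.mp hq
    obtain ⟨i, hiq, hip⟩ := Finset.not_disjoint_iff.mp hqp
    exact Finset.mem_biUnion.mpr ⟨i, hip, mem_repCandidates (hS hqS) hiq⟩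
  calc _ ≤ _ := Finset.card_le_card hsub
    _ ≤ (repSupport p).card * 4 :=
      Finset.card_biUnion_le_card_mul _ _ _ fun i _ => card_repCandidates_le N i
    _ = 8 := by rw [card_repSupport hp]

lemma repSet_two_finite_and_ncard_lt {m : ℕ}
    (h : ∀ D : Finset (Finset ℕ × Finset ℕ), ↑D ⊆ repSet 2 E N →
      (D : Set (Finset ℕ × Finset ℕ)).PairwiseDisjoint repSupport → D.card < m) :
    (repSet 2 E N).Finite ∧ (repSet 2 E N).ncard < 8 * m := by
  have hsmall : ∀ S : Finset (Finset ℕ × Finset ℕ), ↑S ⊆ repSet 2 E N → S.card < 8 * m := by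
    intro S hS
    obtain ⟨D, hDS, hD, hcard⟩ := Finset.exists_subset_pairwiseDisjoint_card_le_mul S
      (fun p hp => Finset.card_pos.mp (by rw [card_repSupport (hS hp)]; norm_num))
      (fun p hp => card_filter_not_disjoint_repSupport_le hS (hS hp))
    have := h D ((Finset.coe_subset.mpr hDS).trans hS) hD
    omega
  have hfin : (repSet 2 E N).Finite := by
    by_contra hinf
    obtain ⟨S, hS, hScard⟩ := Set.Infinite.exists_subset_card_eq hinf (8 * m)
    exact (hsmall S hS).ne hScard
  refine ⟨hfin, ?_⟩
  rw [Set.ncard_eq_toFinset_card _ hfin]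
  exact hsmall _ (by simp)

end Combinatorics

lemma Real.rpow_neg_mul_rpow_neg_le {θ x y M : ℝ} (hθ : 0 ≤ θ) (hx : 0 ≤ x) (hxy : x ≤ y)
    (hM : 0 < M) (hMy : M ≤ y) :
    x ^ (-(1 / 2 + θ)) * y ^ (-(1 / 2 + θ)) ≤ x ^ (-(1 + θ)) * M ^ (-θ) := by
  rcases hx.eq_or_lt with rfl | hx
  · rw [Real.zero_rpow (by linarith), zero_mul]
    positivity
  have hy : 0 < y := hx.trans_le hxy
  calc x ^ (-(1 / 2 + θ)) * y ^ (-(1 / 2 + θ))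
      = x ^ (-(1 + θ)) * (x ^ (1 / 2 : ℝ) * y ^ (-(1 / 2 + θ))) := by
        rw [← mul_assoc, ← Real.rpow_add hx]
        ring_nf
    _ ≤ x ^ (-(1 + θ)) * (y ^ (1 / 2 : ℝ) * y ^ (-(1 / 2 + θ))) := by gcongr
    _ = x ^ (-(1 + θ)) * y ^ (-θ) := by
        rw [← Real.rpow_add hy]
        ring_nf
    _ ≤ x ^ (-(1 + θ)) * M ^ (-θ) :=
        mul_le_mul_of_nonneg_left (Real.rpow_le_rpow_of_nonpos hM hMy (by linarith)) (by positivity)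

noncomputable def repWeight (s : ℝ) (p : Finset ℕ × Finset ℕ) : ℝ≥0∞ :=
  ∏ i ∈ repSupport p, ENNReal.ofReal ((i : ℝ) ^ (-s))

section Weights

variable {θ : ℝ} {E : Set ℕ} {N : ℤ}

lemma exists_mem_repSupport_repWeight_le (hθ : 0 ≤ θ) {p : Finset ℕ × Finset ℕ}
    (hp : p ∈ repSet 2 E N) :
    ∃ x ∈ repSupport p, repWeight (1 / 2 + θ) p ≤
      ENNReal.ofReal ((x : ℝ) ^ (-(1 + θ))) * ENNReal.ofReal ((|(N : ℝ)| / 2) ^ (-θ)) := by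
  obtain ⟨x, y, hxy, hsupp, hN0, hNy⟩ := exists_repSupport_eq_pair hp
  refine ⟨x, by simp [hsupp], ?_⟩
  have hNy' : |(N : ℝ)| ≤ 2 * y := by
    rw [← Int.cast_abs, Int.abs_eq_natAbs]
    exact_mod_cast hNy
  rw [repWeight, hsupp, Finset.prod_pair hxy.ne, ← ENNReal.ofReal_mul (by positivity),
    ← ENNReal.ofReal_mul (by positivity)]
  refine ENNReal.ofReal_le_ofReal (Real.rpow_neg_mul_rpow_neg_le hθ (Nat.cast_nonneg x)
    (by exact_mod_cast hxy.le) ?_ (by linarith))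
  have : (N : ℝ) ≠ 0 := Int.cast_ne_zero.mpr hN0
  positivity

/-- Each representation is charged to the smaller element of its support. -/
lemma tsum_repWeight_le (hθ : 0 ≤ θ) :
    ∑' p : repSet 2 E N, repWeight (1 / 2 + θ) p ≤
      4 * (∑' x : ℕ, ENNReal.ofReal ((x : ℝ) ^ (-(1 + θ)))) *
        ENNReal.ofReal ((|(N : ℝ)| / 2) ^ (-θ)) := by
  classical
  set φ : ℕ → ℝ≥0∞ := fun x =>
    ENNReal.ofReal ((x : ℝ) ^ (-(1 + θ))) * ENNReal.ofReal ((|(N : ℝ)| / 2) ^ (-θ))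
  calc ∑' p : repSet 2 E N, repWeight (1 / 2 + θ) p
      ≤ ∑' p : repSet 2 E N, ∑' x, if (p : Finset ℕ × Finset ℕ) ∈ repCandidates N x
          then φ x else 0 := by
        refine ENNReal.tsum_le_tsum fun p => ?_
        obtain ⟨x, hx, hw⟩ := exists_mem_repSupport_repWeight_le hθ p.2
        refine hw.trans (le_of_eq_of_le ?_ (ENNReal.le_tsum x))
        rw [if_pos (mem_repCandidates p.2 hx)]
    _ ≤ ∑' p, ∑' x, if p ∈ repCandidates N x then φ x else 0 :=
        ENNReal.tsum_comp_le_tsum_of_injective Subtype.val_injective _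
    _ = ∑' x, (repCandidates N x).card * φ x := by
        rw [ENNReal.tsum_comm]
        refine tsum_congr fun x => ?_
        rw [tsum_eq_sum (s := repCandidates N x) fun p hp => if_neg hp]
        simp
    _ ≤ ∑' x, 4 * φ x := by
        gcongr with x
        exact_mod_cast card_repCandidates_le N x
    _ = _ := by rw [ENNReal.tsum_mul_left, ENNReal.tsum_mul_right, mul_assoc]

end Weights

lemma ENNReal.tsum_pi_fin_prod {α : Type*} (g : α → ℝ≥0∞) (k : ℕ) :
    ∑' t : Fin k → α, ∏ j, g (t j) = (∑' a, g a) ^ k := by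
  induction k with
  | zero => simp
  | succ k ih =>
    rw [← (Fin.consEquiv fun _ => α).tsum_eq, pow_succ', ← ih, ← ENNReal.tsum_mul_right]
    simp_rw [← ENNReal.tsum_mul_left]
    rw [← ENNReal.tsum_prod]
    refine tsum_congr fun x => ?_
    simp [Fin.consEquiv, Fin.prod_univ_succ]

abbrev RepConfig (E : Set ℕ) (k : ℕ) : Type :=
  {c : ℤ × (Fin k → Finset ℕ × Finset ℕ) //
    (∀ j, c.2 j ∈ repSet 2 E c.1) ∧ Pairwise (Disjoint on fun j => repSupport (c.2 j))}

section Configurations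

variable {E : Set ℕ} {k : ℕ}

lemma tsum_repConfig_le (w : Finset ℕ × Finset ℕ → ℝ≥0∞) :
    ∑' c : RepConfig E k, ∏ j, w (c.1.2 j) ≤ ∑' N : ℤ, (∑' p : repSet 2 E N, w p) ^ k := by
  calc ∑' c : RepConfig E k, ∏ j, w (c.1.2 j)
      = ∑' c : RepConfig E k, ∏ j, (repSet 2 E c.1.1).indicator w (c.1.2 j) :=
        tsum_congr fun c => Finset.prod_congr rfl fun j _ => (Set.indicator_of_mem (c.2.1 j) w).symm
    _ ≤ ∑' c : ℤ × (Fin k → Finset ℕ × Finset ℕ), ∏ j, (repSet 2 E c.1).indicator w (c.2 j) :=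
        ENNReal.tsum_comp_le_tsum_of_injective Subtype.val_injective
          fun c : ℤ × (Fin k → Finset ℕ × Finset ℕ) => ∏ j, (repSet 2 E c.1).indicator w (c.2 j)
    _ = ∑' N : ℤ, (∑' p : repSet 2 E N, w p) ^ k := by
        rw [ENNReal.tsum_prod']
        simp_rw [ENNReal.tsum_pi_fin_prod, tsum_subtype]

lemma summable_abs_int_div_two_rpow_neg_pow {θ : ℝ} (hk : 1 < θ * k) :
    Summable fun N : ℤ => ((|(N : ℝ)| / 2) ^ (-θ)) ^ k := by
  refine ((Real.summable_abs_int_rpow hk).div_const (2 ^ (-(θ * k)))).congr fun N => ?_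
  rw [← Real.rpow_natCast, ← Real.rpow_mul (by positivity),
    Real.div_rpow (abs_nonneg _) zero_le_two, neg_mul]

lemma tsum_repConfig_repWeight_ne_top {θ : ℝ} (hθ : 0 < θ) (hk : 1 < θ * k) :
    ∑' c : RepConfig E k, ∏ j, repWeight (1 / 2 + θ) (c.1.2 j) ≠ ∞ := by
  refine ne_top_of_le_ne_top ?_ ((tsum_repConfig_le _).trans
    (ENNReal.tsum_le_tsum fun N => pow_le_pow_left' (tsum_repWeight_le hθ.le) k))
  have hZ : ∑' x : ℕ, ENNReal.ofReal ((x : ℝ) ^ (-(1 + θ))) ≠ ∞ := by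
    rw [← ENNReal.ofReal_tsum_of_nonneg (fun _ => by positivity)
      (Real.summable_nat_rpow.mpr (by linarith))]
    exact ENNReal.ofReal_ne_top
  simp_rw [mul_pow,
    ← ENNReal.ofReal_pow (Real.rpow_nonneg (div_nonneg (abs_nonneg _) zero_le_two) _)]
  rw [ENNReal.tsum_mul_left, ← ENNReal.ofReal_tsum_of_nonneg (fun _ => by positivity)
    (summable_abs_int_div_two_rpow_neg_pow hk)]
  exact ENNReal.mul_ne_top (ENNReal.mul_ne_top (ENNReal.pow_ne_top ENNReal.ofNat_ne_top)
    (ENNReal.pow_ne_top hZ)) ENNReal.ofReal_ne_top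

end Configurations

lemma ProbabilityTheory.iIndepFun.measure_biInter_preimage_eq_prod {Ω ι β : Type*}
    [MeasurableSpace Ω] [MeasurableSpace β] {P : Measure Ω} {q : ι → Prop} {Y : ι → Ω → β}
    (hind : iIndepFun (fun i : Subtype q => Y i) P) {U : Finset ι} (hU : ∀ i ∈ U, q i)
    {B : ι → Set β} (hB : ∀ i ∈ U, MeasurableSet (B i)) :
    P (⋂ i ∈ U, Y i ⁻¹' B i) = ∏ i ∈ U, P (Y i ⁻¹' B i) := by
  classical
  have h := hind.measure_inter_preimage_eq_mul (U.subtype q) (sets := fun i => B i)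
    fun i hi => hB i (Finset.mem_subtype.mp hi)
  rw [Finset.prod_subtype_eq_prod_filter (fun i => P (Y i ⁻¹' B i)),
    Finset.filter_true_of_mem hU] at h
  rw [← h]
  congr 1
  ext ω
  simp only [Set.mem_iInter, Set.mem_preimage, Finset.mem_subtype, Subtype.forall]
  exact ⟨fun h i _ hi => h i hi, fun h i hi => h i (hU i hi) hi⟩

lemma exists_nat_measure_le_of_lintegral_ne_top {Ω : Type*} [MeasurableSpace Ω] {P : Measure Ω}
    {f : Ω → ℝ≥0∞} (hf : AEMeasurable f P) (hint : ∫⁻ ω, f ω ∂P ≠ ∞) {δ : ℝ≥0∞}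
    (hδ : δ ≠ 0) : ∃ T : ℕ, P {ω | (T : ℝ≥0∞) ≤ f ω} ≤ δ := by
  obtain ⟨T, hT⟩ := ENNReal.exists_nat_gt (ENNReal.div_lt_top hint hδ).ne
  have hT0 : (T : ℝ≥0∞) ≠ 0 := (pos_of_gt hT).ne'
  refine ⟨T, (meas_ge_le_lintegral_div hf hT0 (ENNReal.natCast_ne_top T)).trans ?_⟩
  rw [ENNReal.div_lt_iff (Or.inl hδ) (Or.inr hint)] at hT
  exact ENNReal.div_le_of_le_mul (mul_comm δ T ▸ hT.le)

lemma Nat.lt_descFactorial {T k m : ℕ} (hk : k ≠ 0) (h : T + k ≤ m) : T < m.descFactorial k :=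
  calc T < T + 1 := T.lt_succ_self
    _ ≤ (T + 1) ^ k := Nat.le_self_pow hk _
    _ ≤ (m + 1 - k) ^ k := Nat.pow_le_pow_left (by omega) k
    _ ≤ m.descFactorial k := m.pow_sub_le_descFactorial k

section Probability

variable {Ω : Type*} [MeasurableSpace Ω] {P : Measure Ω} (Y : ℕ → Ω → ℕ) {E : Set ℕ} {k : ℕ}

def RepConfig.event (c : RepConfig E k) : Set Ω :=
  ⋂ j, ⋂ i ∈ repSupport (c.1.2 j), Y i ⁻¹' {1}

noncomputable def repConfigCount (k : ℕ) (ω : Ω) : ℝ≥0∞ :=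
  ∑' c : RepConfig (Set.Ici 1) k, (c.event Y).indicator 1 ω

variable {Y}

lemma RepConfig.measurableSet_event (hmeas : ∀ n, Measurable (Y n)) (c : RepConfig E k) :
    MeasurableSet (c.event Y) :=
  MeasurableSet.iInter fun _ => MeasurableSet.biInter (Finset.countable_toSet _) fun i _ =>
    hmeas i (measurableSet_singleton 1)

lemma measurable_repConfigCount (hmeas : ∀ n, Measurable (Y n)) :
    Measurable (repConfigCount Y k) :=
  Measurable.tsum fun c => measurable_one.indicator (c.measurableSet_event hmeas)

variable {s : ℝ} (hind : iIndepFun (fun n : {n : ℕ // 1 ≤ n} => Y n) P)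
  (hP1 : ∀ n : ℕ, 1 ≤ n → P {ω | Y n ω = 1} = ENNReal.ofReal ((n : ℝ) ^ (-s)))
include hind hP1

lemma RepConfig.measure_event (c : RepConfig (Set.Ici 1) k) :
    P (c.event Y) = ∏ j, repWeight s (c.1.2 j) := by
  classical
  set U := Finset.univ.biUnion fun j => repSupport (c.1.2 j)
  have hU : ∀ i ∈ U, 1 ≤ i := by
    intro i hi
    obtain ⟨j, -, hij⟩ := Finset.mem_biUnion.mp hi
    exact repSupport_subset_of_mem_repSet (c.2.1 j) hij
  have hevent : c.event Y = ⋂ i ∈ U, Y i ⁻¹' {1} := by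
    rw [Finset.set_biInter_biUnion, RepConfig.event]
    simp
  rw [hevent, hind.measure_biInter_preimage_eq_prod hU fun _ _ => measurableSet_singleton 1,
    Finset.prod_biUnion fun i _ j _ hij => c.2.2 hij]
  exact Finset.prod_congr rfl fun j _ => Finset.prod_congr rfl fun i hi =>
    hP1 i (hU i (Finset.mem_biUnion.mpr ⟨j, Finset.mem_univ j, hi⟩))

lemma lintegral_repConfigCount (hmeas : ∀ n, Measurable (Y n)) :
    ∫⁻ ω, repConfigCount Y k ω ∂P =
      ∑' c : RepConfig (Set.Ici 1) k, ∏ j, repWeight s (c.1.2 j) := by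
  unfold repConfigCount
  rw [lintegral_tsum fun c =>
    (measurable_one.indicator (c.measurableSet_event hmeas)).aemeasurable]
  exact tsum_congr fun c => by
    rw [lintegral_indicator_one (c.measurableSet_event hmeas), c.measure_event hind hP1]

end Probability

lemma descFactorial_le_repConfigCount {Ω : Type*} {Y : ℕ → Ω → ℕ} {ω : Ω} {N : ℤ} {k : ℕ}
    {D : Finset (Finset ℕ × Finset ℕ)} (hD : ↑D ⊆ repSet 2 {n | 1 ≤ n ∧ Y n ω = 1} N)
    (hdisj : (D : Set (Finset ℕ × Finset ℕ)).PairwiseDisjoint repSupport) :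
    (D.card.descFactorial k : ℝ≥0∞) ≤ repConfigCount Y k ω := by
  classical
  let cfg : (Fin k ↪ D) → RepConfig (Set.Ici 1) k := fun f =>
    ⟨(N, fun j => f j), fun j => repSet_mono (fun _ hn => hn.1) (hD (f j).2),
      fun i j hij => hdisj (f i).2 (f j).2 fun h => hij (f.injective (Subtype.ext h))⟩
  have hcfg : Injective cfg := fun f g h => DFunLike.ext f g fun j =>
    Subtype.ext (congrFun (congrArg (fun c : RepConfig (Set.Ici 1) k => c.1.2) h) j)
  have hocc : ∀ f, ω ∈ (cfg f).event Y := by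
    intro f
    simp only [RepConfig.event, Set.mem_iInter, Set.mem_preimage, Set.mem_singleton_iff]
    exact fun j i hi => (repSupport_subset_of_mem_repSet (hD (f j).2) hi).2
  calc (D.card.descFactorial k : ℝ≥0∞) = ∑' f : Fin k ↪ D, ((cfg f).event Y).indicator 1 ω := by
        simp [tsum_fintype, Set.indicator_of_mem (hocc _), Fintype.card_embedding_eq]
    _ ≤ repConfigCount Y k ω :=
        ENNReal.tsum_comp_le_tsum_of_injective hcfg fun c => (c.event Y).indicator 1 ω

theorem exists_good_event_r2_general {Ω : Type*} [MeasurableSpace Ω] (P : Measure Ω)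
    [IsProbabilityMeasure P] (θ s : ℝ) (hθ₀ : 0 < θ)
    (hs : s = 1 / 2 + θ) (Y : ℕ → Ω → ℕ)
    (hmeas : ∀ n, Measurable (Y n))
    (hind : ProbabilityTheory.iIndepFun
      (fun n : {n : ℕ // 1 ≤ n} => Y n) P)
    (hP1 : ∀ n : ℕ, 1 ≤ n → P {ω | Y n ω = 1} = ENNReal.ofReal ((n : ℝ) ^ (-s)))
    (ε : ℝ) (hε : 0 < ε) :
    ∃ K : ℕ, ∃ Ω₂ : Set Ω, MeasurableSet Ω₂ ∧ 1 - ENNReal.ofReal ε ≤ P Ω₂ ∧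
      ∀ ω ∈ Ω₂, ∀ N : ℤ,
        (repSet 2 {n | 1 ≤ n ∧ Y n ω = 1} N).Finite ∧
          (repSet 2 {n | 1 ≤ n ∧ Y n ω = 1} N).ncard < K := by
  subst hs
  obtain ⟨k, hk⟩ : ∃ k : ℕ, 1 < θ * k := by
    obtain ⟨k, hk⟩ := exists_nat_gt (1 / θ)
    exact ⟨k, by rwa [div_lt_iff₀ hθ₀, mul_comm] at hk⟩
  have hk0 : k ≠ 0 := by
    rintro rfl
    norm_num at hk
  have hW := measurable_repConfigCount (k := k) hmeas
  obtain ⟨T, hT⟩ := exists_nat_measure_le_of_lintegral_ne_top hW.aemeasurable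
    (by rw [lintegral_repConfigCount hind hP1 hmeas]; exact tsum_repConfig_repWeight_ne_top hθ₀ hk)
    (ENNReal.ofReal_pos.mpr hε).ne'
  have hbad : MeasurableSet {ω | (T : ℝ≥0∞) ≤ repConfigCount Y k ω} :=
    measurableSet_le measurable_const hW
  refine ⟨8 * (T + k), _, hbad.compl, ?_, fun ω hω N => ?_⟩
  · rw [prob_compl_eq_one_sub hbad]
    exact tsub_le_tsub_left hT 1
  refine repSet_two_finite_and_ncard_lt fun D hD hdisj => ?_
  by_contra! hcard
  exact hω ((Nat.cast_le.mpr (Nat.lt_descFactorial hk0 hcard).le).trans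
    (descFactorial_le_repConfigCount hD hdisj))

/-- Let `s = 1/2 + θ` with `0 < θ < 1/2`. For every `ε > 0` there exist a constant `K` and a
measurable set `Ω₂` with `P(Ω₂) ≥ 1 - ε` such that `r_N^{(2)}(ω) < K` for every `ω ∈ Ω₂` and
every `N ∈ ℤ`. -/
theorem exists_good_event_r2 {Ω : Type*} [MeasurableSpace Ω] (P : Measure Ω)
    [IsProbabilityMeasure P] (θ s : ℝ) (hθ₀ : 0 < θ) (hθ₁ : θ < 1 / 2)
    (hs : s = 1 / 2 + θ) (Y : ℕ → Ω → ℕ)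
    (hmeas : ∀ n, Measurable (Y n))
    (hval : ∀ n ω, Y n ω = 0 ∨ Y n ω = 1)
    (hind : ProbabilityTheory.iIndepFun
      (fun n : {n : ℕ // 1 ≤ n} => Y n) P)
    (hP1 : ∀ n : ℕ, 1 ≤ n → P {ω | Y n ω = 1} = ENNReal.ofReal ((n : ℝ) ^ (-s)))
    (ε : ℝ) (hε : 0 < ε) :
    ∃ K : ℕ, ∃ Ω₂ : Set Ω, MeasurableSet Ω₂ ∧ 1 - ENNReal.ofReal ε ≤ P Ω₂ ∧
      ∀ ω ∈ Ω₂, ∀ N : ℤ,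
        (repSet 2 {n | 1 ≤ n ∧ Y n ω = 1} N).Finite ∧
          (repSet 2 {n | 1 ≤ n ∧ Y n ω = 1} N).ncard < K :=
  exists_good_event_r2_general P θ s hθ₀ hs Y hmeas hind hP1 ε hε
end

section
/- Let (Ω, P) be a probability space and let Y₁, Y₂, … be independent real-valued random variables, each taking only finitely many values, with Exp(Y_i) > 0 for every i. Set S_N = Y₁ + … + Y_N. If Exp(S_N) → ∞ as N → ∞ and ∑_{i=1}^∞ Var(Y_i)/(Exp(S_i))² < ∞, then S_N / Exp(S_N) → 1 as N → ∞ almost surely. -/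
/-!
Centre and normalise the summands: `Z k = (X k - 𝔼 X k) / b (k + 1)`, where `b n = 𝔼 S n`.
The `Z k` are independent, centred, and their variances `Var X k / b (k + 1) ^ 2` are summable,
so their partial sums form a martingale bounded in `L²`, which converges almost surely
(Kolmogorov's one-series theorem). Kronecker's lemma, with the increasing weights `b n → ∞`,
turns the convergence of `∑ (X k - 𝔼 X k) / b (k + 1)` into `(S n - b n) / b n → 0`.
-/

open MeasureTheory Filter ProbabilityTheory Finset Topology

lemma Finset.sum_Icc_one_eq_sum_range {M : Type*} [AddCommMonoid M] (f : ℕ → M) (n : ℕ) :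
    ∑ i ∈ Icc 1 n, f i = ∑ k ∈ range n, f (k + 1) := by
  rw [← Ico_add_one_right_eq_Icc, sum_Ico_eq_sum_range, Nat.add_sub_cancel]
  simp only [add_comm]

section Kronecker

variable {b x : ℕ → ℝ}

/-- Abel summation against the partial sums `s n = ∑ k < n, x k / b (k + 1)`, recentred at `c`. -/
lemma sum_range_eq_abel (hb : ∀ k, b (k + 1) ≠ 0) (c : ℝ) (n : ℕ) :
    ∑ k ∈ range n, x k = b n * (∑ k ∈ range n, x k / b (k + 1) - c) + b 0 * c -
      ∑ k ∈ range n, (b (k + 1) - b k) * (∑ j ∈ range k, x j / b (j + 1) - c) := by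
  induction n with
  | zero => simp
  | succ n ih =>
    simp only [sum_range_succ, ih]
    field_simp [hb n]
    ring

lemma tendsto_sum_range_sub_mul_div {u : ℕ → ℝ} (hmono : Monotone b)
    (htop : Tendsto b atTop atTop) (hu : Tendsto u atTop (𝓝 0)) :
    Tendsto (fun n => (∑ k ∈ range n, (b (k + 1) - b k) * u k) / b n) atTop (𝓝 0) := by
  have hweights : ∀ n, ∑ k ∈ range n, (b (k + 1) - b k) = b n - b 0 := sum_range_sub b
  have ho : (fun n => ∑ k ∈ range n, (b (k + 1) - b k) * u k) =o[atTop] fun n => b n - b 0 := by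
    have h := (Asymptotics.isBigO_refl (fun k => b (k + 1) - b k) atTop).mul_isLittleO
      ((Asymptotics.isLittleO_one_iff ℝ).2 hu)
    simp only [mul_one] at h
    simpa only [hweights] using h.sum_range (fun k => sub_nonneg.2 (hmono k.le_succ))
      (by simp_rw [hweights, sub_eq_add_neg]; exact tendsto_atTop_add_const_right _ _ htop)
  refine (ho.trans_isBigO ?_).tendsto_div_nhds_zero
  exact (Asymptotics.isBigO_refl b atTop).sub
    (Asymptotics.isLittleO_const_left.2 (Or.inr (tendsto_norm_atTop_atTop.comp htop))).isBigO

theorem tendsto_sum_range_div_of_tendsto_sum_range_div {c : ℝ} (hmono : Monotone b)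
    (htop : Tendsto b atTop atTop) (hb : ∀ k, b (k + 1) ≠ 0)
    (hx : Tendsto (fun n => ∑ k ∈ range n, x k / b (k + 1)) atTop (𝓝 c)) :
    Tendsto (fun n => (∑ k ∈ range n, x k) / b n) atTop (𝓝 0) := by
  have hu : Tendsto (fun n => ∑ k ∈ range n, x k / b (k + 1) - c) atTop (𝓝 0) := by
    simpa using hx.sub_const c
  have hlim := (hu.add ((tendsto_const_nhds (x := b 0 * c)).div_atTop htop)).sub
    (tendsto_sum_range_sub_mul_div hmono htop hu)
  simp only [add_zero, sub_zero] at hlim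
  refine hlim.congr' ?_
  filter_upwards [htop.eventually_ne_atTop 0] with n hn
  rw [sum_range_eq_abel (x := x) hb c n]
  field_simp

end Kronecker

section Probability

variable {Ω : Type*} {mΩ : MeasurableSpace Ω} {P : Measure Ω}

lemma MeasureTheory.memLp_of_finite_range {E : Type*} [NormedAddCommGroup E] [IsFiniteMeasure P]
    {X : Ω → E} (hX : AEStronglyMeasurable X P) (hfin : (Set.range X).Finite) (p : ENNReal) :
    MemLp X p P := by
  obtain ⟨C, hC⟩ := (hfin.image norm).bddAbove
  exact MemLp.of_bound hX C (ae_of_all _ fun ω => hC ⟨X ω, ⟨ω, rfl⟩, rfl⟩)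

lemma MeasureTheory.Submartingale.ae_exists_tendsto_of_integral_sq_le [IsProbabilityMeasure P]
    {ℱ : Filtration ℕ mΩ} {f : ℕ → Ω → ℝ} {R : ℝ} (hf : Submartingale f ℱ P)
    (hL2 : ∀ n, MemLp (f n) 2 P) (hR : ∀ n, ∫ ω, f n ω ^ 2 ∂P ≤ R) :
    ∀ᵐ ω ∂P, ∃ c, Tendsto (fun n => f n ω) atTop (𝓝 c) := by
  refine hf.exists_ae_tendsto_of_bdd (R := (1 + R).toNNReal) fun n => ?_
  have hint := (hL2 n).integrable one_le_two
  have hsq := (hL2 n).integrable_sq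
  rw [eLpNorm_one_eq_lintegral_enorm, ← ofReal_integral_norm_eq_lintegral_enorm hint,
    ← ENNReal.ofReal_coe_nnreal, Real.coe_toNNReal']
  refine ENNReal.ofReal_le_ofReal (le_max_of_le_left ?_)
  calc ∫ ω, ‖f n ω‖ ∂P ≤ ∫ ω, (1 + f n ω ^ 2) ∂P :=
        integral_mono hint.norm ((integrable_const 1).add hsq) fun ω => by
          rw [Real.norm_eq_abs]
          nlinarith [sq_nonneg (|f n ω| - 1), sq_abs (f n ω)]
    _ = 1 + ∫ ω, f n ω ^ 2 ∂P := by
        rw [integral_add (integrable_const 1) hsq, integral_const]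
        simp
    _ ≤ 1 + R := by linarith [hR n]

lemma ProbabilityTheory.iIndepFun.martingale_sum_range_succ [IsFiniteMeasure P]
    {Z : ℕ → Ω → ℝ} (hind : iIndepFun Z P) (hZ : ∀ k, StronglyMeasurable (Z k))
    (hint : ∀ k, Integrable (Z k) P) (hmean : ∀ k, P[Z k] = 0) :
    Martingale (fun n => ∑ k ∈ range (n + 1), Z k) (Filtration.natural Z hZ) P := by
  set ℱ := Filtration.natural Z hZ
  have hint_sum : ∀ n, Integrable (∑ k ∈ range (n + 1), Z k) P := fun n =>
    integrable_finsetSum' _ fun k _ => hint k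
  have hadapted : StronglyAdapted ℱ fun n => ∑ k ∈ range (n + 1), Z k := fun n =>
    Finset.stronglyMeasurable_sum _ fun k hk =>
      (Filtration.stronglyAdapted_natural hZ k).mono
        (ℱ.mono (Nat.lt_succ_iff.mp (mem_range.mp hk)))
  refine martingale_nat hadapted hint_sum fun n => ?_
  rw [sum_range_succ _ (n + 1)]
  refine EventuallyEq.symm ?_
  calc P[∑ k ∈ range (n + 1), Z k + Z (n + 1)|ℱ n]
      =ᵐ[P] P[∑ k ∈ range (n + 1), Z k|ℱ n] + P[Z (n + 1)|ℱ n] :=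
        condExp_add (hint_sum n) (hint _) _
    _ =ᵐ[P] ∑ k ∈ range (n + 1), Z k + fun _ => P[Z (n + 1)] := by
        refine EventuallyEq.add ?_ ?_
        · rw [condExp_of_stronglyMeasurable (ℱ.le n) (hadapted n) (hint_sum n)]
        · exact hind.condExp_natural_ae_eq_of_lt hZ n.lt_succ_self
    _ = ∑ k ∈ range (n + 1), Z k := by
        ext ω
        simp [hmean]

theorem ProbabilityTheory.iIndepFun.ae_exists_tendsto_sum_range_of_summable_variance
    [IsProbabilityMeasure P] {Z : ℕ → Ω → ℝ} (hind : iIndepFun Z P)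
    (hmeas : ∀ k, Measurable (Z k)) (hL2 : ∀ k, MemLp (Z k) 2 P) (hmean : ∀ k, P[Z k] = 0)
    (hvar : Summable fun k => Var[Z k; P]) :
    ∀ᵐ ω ∂P, ∃ c, Tendsto (fun n => ∑ k ∈ range n, Z k ω) atTop (𝓝 c) := by
  set M : ℕ → Ω → ℝ := fun n => ∑ k ∈ range (n + 1), Z k
  have hM2 : ∀ n, MemLp (M n) 2 P := fun n => memLp_finsetSum' _ fun k _ => hL2 k
  have hmart : Martingale M (Filtration.natural Z fun k => (hmeas k).stronglyMeasurable) P :=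
    hind.martingale_sum_range_succ _ (fun k => (hL2 k).integrable one_le_two) hmean
  have hsq : ∀ n, ∫ ω, M n ω ^ 2 ∂P ≤ ∑' k, Var[Z k; P] := fun n => by
    have hMmean : P[M n] = 0 := by
      simp only [M, Finset.sum_apply]
      rw [integral_finsetSum _ fun k _ => (hL2 k).integrable one_le_two]
      simp [hmean]
    rw [← variance_of_integral_eq_zero (hM2 n).aestronglyMeasurable.aemeasurable hMmean,
      IndepFun.variance_sum (fun k _ => hL2 k) fun i _ j _ hij => hind.indepFun hij]
    exact hvar.sum_le_tsum _ fun k _ => variance_nonneg _ _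
  filter_upwards [hmart.submartingale.ae_exists_tendsto_of_integral_sq_le hM2 hsq]
    with ω ⟨c, hc⟩
  refine ⟨c, (tendsto_add_atTop_iff_nat 1).1 ?_⟩
  simpa [M] using hc

theorem ProbabilityTheory.iIndepFun.ae_tendsto_sum_range_div_sum_integral
    [IsProbabilityMeasure P] {X : ℕ → Ω → ℝ} (hind : iIndepFun X P)
    (hmeas : ∀ k, Measurable (X k)) (hL2 : ∀ k, MemLp (X k) 2 P) (hpos : ∀ k, 0 < P[X k])
    (htop : Tendsto (fun n => ∑ k ∈ range n, P[X k]) atTop atTop)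
    (hvar : Summable fun k => Var[X k; P] / (∑ j ∈ range (k + 1), P[X j]) ^ 2) :
    ∀ᵐ ω ∂P, Tendsto (fun n => (∑ k ∈ range n, X k ω) / ∑ k ∈ range n, P[X k]) atTop (𝓝 1) := by
  set b : ℕ → ℝ := fun n => ∑ k ∈ range n, P[X k]
  have hmono : Monotone b := monotone_nat_of_le_succ fun n => by
    simpa [b, sum_range_succ] using (hpos n).le
  have hb : ∀ k, b (k + 1) ≠ 0 := fun k =>
    (sum_pos (fun j _ => hpos j) nonempty_range_add_one).ne'
  set Z : ℕ → Ω → ℝ := fun k ω => (X k ω - P[X k]) / b (k + 1)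
  have hindZ : iIndepFun Z P :=
    hind.comp (fun k y => (y - ∫ ω, X k ω ∂P) / b (k + 1)) fun k => by fun_prop
  have hZ : ∀ᵐ ω ∂P, ∃ c, Tendsto (fun n => ∑ k ∈ range n, Z k ω) atTop (𝓝 c) := by
    refine hindZ.ae_exists_tendsto_sum_range_of_summable_variance (fun k => by fun_prop)
      (fun k => ((hL2 k).sub (memLp_const _)).mul_const (b (k + 1))⁻¹) (fun k => ?_) ?_
    · simp [Z, integral_div, integral_sub ((hL2 k).integrable one_le_two) (integrable_const _)]
    · convert hvar using 2 with k
      simp_rw [Z, b, div_eq_mul_inv, variance_mul_const,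
        variance_sub_const (hmeas k).aestronglyMeasurable, inv_pow]
  filter_upwards [hZ] with ω ⟨c, hc⟩
  have hdev := tendsto_sum_range_div_of_tendsto_sum_range_div hmono htop hb hc
  rw [← add_zero 1]
  refine (hdev.const_add 1).congr' ?_
  filter_upwards [htop.eventually_ne_atTop 0] with n hn
  simp only [b, sum_sub_distrib] at hn ⊢
  field_simp
  ring

end Probability

/-- A variant of the strong law of large numbers: if `Y₁, Y₂, …` are independent simple random
variables with `Exp(Y i) > 0`, `S N = Y₁ + ⋯ + Y_N`, `Exp(S N) → ∞` and
`∑ i, Var(Y i) / (Exp(S i))² < ∞`, then `S N / Exp(S N) → 1` almost surely. -/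
theorem slln_variant {Ω : Type*} [MeasurableSpace Ω] (P : Measure Ω)
    [IsProbabilityMeasure P] (Y : ℕ → Ω → ℝ)
    (hmeas : ∀ i, Measurable (Y i))
    (hsimple : ∀ i, (Set.range (Y i)).Finite)
    (hind : ProbabilityTheory.iIndepFun
      (fun i : {i : ℕ // 1 ≤ i} => Y i) P)
    (hexp : ∀ i : ℕ, 1 ≤ i → 0 < ∫ ω, Y i ω ∂P)
    (htop : Tendsto (fun N => ∫ ω, ∑ i ∈ Finset.Icc 1 N, Y i ω ∂P) atTop atTop)
    (hvar : Summable (fun i : ℕ =>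
      ProbabilityTheory.variance (Y (i + 1)) P /
        (∫ ω, ∑ j ∈ Finset.Icc 1 (i + 1), Y j ω ∂P) ^ 2)) :
    ∀ᵐ ω ∂P, Tendsto
      (fun N => (∑ i ∈ Finset.Icc 1 N, Y i ω) / ∫ ω', ∑ i ∈ Finset.Icc 1 N, Y i ω' ∂P)
      atTop (nhds 1) := by
  have hL2 : ∀ i, MemLp (Y i) 2 P := fun i =>
    memLp_of_finite_range (hmeas i).aestronglyMeasurable (hsimple i) 2
  have hES : ∀ N, ∫ ω, ∑ k ∈ range N, Y (k + 1) ω ∂P = ∑ k ∈ range N, ∫ ω, Y (k + 1) ω ∂P :=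
    fun N => integral_finsetSum _ fun k _ => (hL2 _).integrable one_le_two
  have hindX : iIndepFun (fun k : ℕ => Y (k + 1)) P :=
    hind.precomp (g := fun k => ⟨k + 1, Nat.le_add_left 1 k⟩) fun a b h => by simpa using h
  simp only [sum_Icc_one_eq_sum_range, hES] at htop hvar ⊢
  exact hindX.ae_tendsto_sum_range_div_sum_integral (fun k => hmeas _) (fun k => hL2 _)
    (fun k => hexp _ (Nat.le_add_left 1 k)) htop hvar
end

section
/- Let p > 2 and let E ⊆ ℤ be a Λ(p) set. Then there is a constant C such that for all integers a and d with d ≠ 0 and every positive integer N, card(E ∩ {a + d, a + 2d, …, a + Nd}) ≤ C · N^{2/p}. -/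
open MeasureTheory

/-- `E ⊆ ℤ` is a `Λ(p)` set: there is a constant `C` such that every trigonometric polynomial
on the circle `ℝ/ℤ` with frequencies in `E` satisfies `‖f‖_p ≤ C * ‖f‖_2`. -/
def IsLambdaSet (p : ℝ) (E : Set ℤ) : Prop :=
  ∃ C : ℝ, 0 < C ∧ ∀ c : ℤ →₀ ℂ, ↑c.support ⊆ E →
    eLpNorm (fun x : AddCircle (1 : ℝ) => ∑ n ∈ c.support, c n • fourier n x)
        (ENNReal.ofReal p) volume ≤
      ENNReal.ofReal C *
        eLpNorm (fun x : AddCircle (1 : ℝ) => ∑ n ∈ c.support, c n • fourier n x) 2 volume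

/-!
Let `F = E ∩ {a + k d : 1 ≤ k ≤ N}` have `s` elements and put `f = ∑_{n ∈ F} e_n`. By Parseval
`‖f‖₂ = √s`. On the set of `x` with `‖d x‖ ≤ 1/(6N)`, which has measure `1/(3N)`, every term of
`e(-a x) f(x) = ∑_k e(k d x)` has real part at least `cos (π/3) = 1/2`, so `|f| ≥ s/2` there and
`‖f‖_p ≥ (s/2) (3N)^(-1/p)`. The `Λ(p)` inequality `‖f‖_p ≤ C √s` then forces
`s ≤ 4 C² (3N)^(2/p) ≤ 12 C² N^(2/p)`.
-/

theorem mul_measure_rpow_le_eLpNorm {α ε : Type*} [MeasurableSpace α] {μ : Measure α}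
    [TopologicalSpace ε] [ESeminormedAddMonoid ε] {f : α → ε} {A : Set α} (hA : MeasurableSet A)
    {c : ENNReal} (hf : ∀ x ∈ A, c ≤ ‖f x‖ₑ) {p : ENNReal} (hp₀ : p ≠ 0) (hp : p ≠ ⊤) :
    c * μ A ^ (1 / p.toReal) ≤ eLpNorm f p μ :=
  calc c * μ A ^ (1 / p.toReal) = eLpNorm (A.indicator fun _ => c) p μ := by
        rw [eLpNorm_indicator_const hA hp₀ hp, enorm_eq_self]
    _ ≤ eLpNorm f p μ := eLpNorm_mono_enorm fun x => by
        by_cases hx : x ∈ A <;> simp [hx, hf]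

theorem le_sq_of_le_mul_sqrt {s k : ℝ} (hs : 0 ≤ s) (h : s ≤ k * √s) : s ≤ k ^ 2 := by
  nlinarith [sq_nonneg (k - √s), Real.sq_sqrt hs]

theorem le_of_half_mul_rpow_le_mul_sqrt {p C s N : ℝ} (hp : 2 ≤ p) (hs : 0 ≤ s) (hN : 0 < N)
    (h : s / 2 * (1 / (3 * N)) ^ (1 / p) ≤ C * √s) : s ≤ 12 * C ^ 2 * N ^ (2 / p) := by
  have hB : 0 < (3 * N) ^ (1 / p) := by positivity
  have hs' : s ≤ 2 * C * (3 * N) ^ (1 / p) * √s := by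
    rw [one_div (3 * N), Real.inv_rpow (by positivity), ← div_eq_mul_inv, div_le_iff₀ hB] at h
    linarith
  have hsq : ((3 * N) ^ (1 / p)) ^ 2 = (3 * N) ^ (2 / p) := by
    rw [← Real.rpow_natCast, ← Real.rpow_mul (by positivity)]; ring_nf
  have h3 : (3 : ℝ) ^ (2 / p) ≤ 3 :=
    Real.rpow_le_self_of_one_le (by norm_num) ((div_le_one (by linarith)).2 hp)
  calc s ≤ (2 * C * (3 * N) ^ (1 / p)) ^ 2 := le_sq_of_le_mul_sqrt hs hs'
    _ = 4 * C ^ 2 * (3 ^ (2 / p) * N ^ (2 / p)) := by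
        rw [mul_pow, hsq, Real.mul_rpow (by norm_num) hN.le]; ring
    _ ≤ 12 * C ^ 2 * N ^ (2 / p) := by
        have : 0 ≤ C ^ 2 * N ^ (2 / p) := by positivity
        nlinarith

theorem AddCircle.volume_setOf_norm_zsmul_le {T : ℝ} [Fact (0 < T)] {d : ℤ} (hd : d ≠ 0)
    {r : ℝ} (hr : 2 * r ≤ T) :
    volume {x : AddCircle T | ‖d • x‖ ≤ r} = ENNReal.ofReal (2 * r) := by
  have hpre : {x : AddCircle T | ‖d • x‖ ≤ r} = (d • ·) ⁻¹' Metric.closedBall 0 r := by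
    ext x; simp
  rw [hpre, (Measure.measurePreserving_zsmul volume hd).measure_preimage
    measurableSet_closedBall.nullMeasurableSet, AddCircle.volume_closedBall, min_eq_right hr]

theorem eLpNorm_two_sum_fourier (F : Finset ℤ) :
    eLpNorm (fun x : UnitAddCircle => ∑ n ∈ F, fourier n x) 2 volume =
      ENNReal.ofReal √F.card := by
  have hvol : (volume : Measure UnitAddCircle) = AddCircle.haarAddCircle := by
    simp [AddCircle.volume_eq_smul_haarAddCircle]
  set g := ∑ n ∈ F, fourierLp (T := 1) 2 n
  have hg : g =ᵐ[AddCircle.haarAddCircle] fun x => ∑ n ∈ F, fourier n x := by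
    have : g = ContinuousMap.toLp 2 AddCircle.haarAddCircle ℂ (∑ n ∈ F, fourier n) :=
      (map_sum _ _ _).symm
    rw [this]
    filter_upwards [ContinuousMap.coeFn_toLp (p := 2) (𝕜 := ℂ) AddCircle.haarAddCircle
      (∑ n ∈ F, fourier n)] with x hx
    rw [hx, ContinuousMap.coe_sum, Finset.sum_apply]
  have hnorm : ‖g‖ = √F.card := by
    have := (orthonormal_fourier (T := 1)).inner_sum (fun _ => (1 : ℂ)) (fun _ => (1 : ℂ)) F
    rw [norm_eq_sqrt_re_inner (𝕜 := ℂ)]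
    simp_all [g]
  rw [hvol, ← eLpNorm_congr_ae hg, ← hnorm, Lp.norm_def,
    ENNReal.ofReal_toReal (Lp.eLpNorm_ne_top g)]

theorem half_le_re_fourier_one {y : UnitAddCircle} (hy : ‖y‖ ≤ 1 / 6) :
    1 / 2 ≤ (fourier 1 y).re := by
  induction y using QuotientAddGroup.induction_on with | H r => ?_
  have hr : |r - round r| ≤ 1 / 6 := by simpa [UnitAddCircle.norm_eq] using hy
  have h2pi : |2 * Real.pi * (r - round r)| ≤ Real.pi / 3 := by
    rw [abs_mul, abs_of_pos Real.two_pi_pos]; nlinarith [Real.pi_pos]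
  calc (1 : ℝ) / 2 = Real.cos (Real.pi / 3) := Real.cos_pi_div_three.symm
    _ ≤ Real.cos |2 * Real.pi * (r - round r)| :=
        Real.cos_le_cos_of_nonneg_of_le_pi (abs_nonneg _) (by linarith [Real.pi_pos]) h2pi
    _ = Real.cos (2 * Real.pi * r) := by
        rw [Real.cos_abs, mul_sub, mul_comm _ (round r : ℝ), Real.cos_sub_int_mul_two_pi]
    _ = (fourier 1 (r : UnitAddCircle)).re := by
        rw [fourier_one, AddCircle.toCircle_apply_mk, Circle.coe_exp,
          Complex.exp_ofReal_mul_I_re, div_one]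

theorem card_div_two_le_norm_sum_fourier {K : Finset ℤ} {y : UnitAddCircle}
    (hK : ∀ k ∈ K, ‖k • y‖ ≤ 1 / 6) : (K.card : ℝ) / 2 ≤ ‖∑ k ∈ K, fourier k y‖ :=
  calc (K.card : ℝ) / 2 = ∑ _k ∈ K, (1 / 2 : ℝ) := by rw [Finset.sum_const, nsmul_eq_mul]; ring
    _ ≤ ∑ k ∈ K, (fourier k y).re := Finset.sum_le_sum fun k hk => by
        simpa only [fourier_one, fourier_apply, one_smul] using half_le_re_fourier_one (hK k hk)
    _ = (∑ k ∈ K, fourier k y).re := (Complex.re_sum _ _).symm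
    _ ≤ ‖∑ k ∈ K, fourier k y‖ := Complex.re_le_norm _

theorem norm_sum_fourier_add_mul {T : ℝ} (K : Finset ℤ) (a d : ℤ) (x : AddCircle T) :
    ‖∑ k ∈ K, fourier (a + k * d) x‖ = ‖∑ k ∈ K, fourier k (d • x)‖ := by
  have h (k : ℤ) : fourier (a + k * d) x = fourier a x * fourier k (d • x) := by
    rw [fourier_add, fourier_apply (n := k * d), fourier_apply (n := k), mul_smul]
  simp only [h, ← Finset.mul_sum, norm_mul, fourier_apply (n := a), Circle.norm_coe, one_mul]

theorem ofReal_le_eLpNorm_sum_fourier_progression {p : ℝ} (hp : 0 < p) (a : ℤ) {d : ℤ}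
    (hd : d ≠ 0) {N : ℕ} (hN : 0 < N) {K : Finset ℤ} (hK : K ⊆ Finset.Icc 1 (N : ℤ)) :
    ENNReal.ofReal (K.card / 2 * (1 / (3 * N)) ^ (1 / p)) ≤
      eLpNorm (fun x : UnitAddCircle => ∑ k ∈ K, fourier (a + k * d) x)
        (ENNReal.ofReal p) volume := by
  have hN' : (1 : ℝ) ≤ N := Nat.one_le_cast.2 hN
  set A := {x : UnitAddCircle | ‖d • x‖ ≤ 1 / (6 * N)}
  have hAvol : volume A = ENNReal.ofReal (1 / (3 * N)) := by
    rw [AddCircle.volume_setOf_norm_zsmul_le hd]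
    · ring_nf
    · field_simp; linarith
  have hA : MeasurableSet A :=
    (isClosed_le (continuous_norm.comp (continuous_zsmul d)) continuous_const).measurableSet
  have hf : ∀ x ∈ A, ENNReal.ofReal (K.card / 2) ≤ ‖∑ k ∈ K, fourier (a + k * d) x‖ₑ := by
    intro x hx
    rw [← ofReal_norm, norm_sum_fourier_add_mul]
    refine ENNReal.ofReal_le_ofReal (card_div_two_le_norm_sum_fourier fun k hk => ?_)
    obtain ⟨hk1, hkN⟩ := Finset.mem_Icc.1 (hK hk)
    calc ‖k • d • x‖ ≤ ‖k‖ * ‖d • x‖ := norm_zsmul_le _ _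
      _ ≤ N * (1 / (6 * N)) := by
          gcongr
          · rw [Int.norm_eq_abs, abs_of_pos (by exact_mod_cast hk1)]; exact_mod_cast hkN
          · exact hx
      _ = 1 / 6 := by field_simp
  have := mul_measure_rpow_le_eLpNorm (μ := volume) (p := ENNReal.ofReal p) hA hf
    (by simpa using hp) ENNReal.ofReal_ne_top
  rwa [hAvol, ENNReal.toReal_ofReal hp.le, ENNReal.ofReal_rpow_of_nonneg (by positivity)
    (by positivity), ← ENNReal.ofReal_mul (by positivity)] at this

theorem IsLambdaSet.exists_eLpNorm_sum_fourier_le {p : ℝ} {E : Set ℤ} (hE : IsLambdaSet p E) :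
    ∃ C : ℝ, 0 < C ∧ ∀ F : Finset ℤ, ↑F ⊆ E →
      eLpNorm (fun x : UnitAddCircle => ∑ n ∈ F, fourier n x) (ENNReal.ofReal p) volume ≤
        ENNReal.ofReal (C * √F.card) := by
  classical
  obtain ⟨C, hC, hE⟩ := hE
  refine ⟨C, hC, fun F hF => ?_⟩
  set c : ℤ →₀ ℂ := Finsupp.indicator F fun _ _ => 1
  have hc : c.support = F := by ext n; simp [c, Finsupp.indicator_apply]
  have hsum : (fun x => ∑ n ∈ c.support, c n • fourier n x) =
      fun x : UnitAddCircle => ∑ n ∈ F, fourier n x := by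
    ext x
    rw [hc]
    exact Finset.sum_congr rfl fun n hn => by simp [c, Finsupp.indicator_apply, hn]
  have := hE c (hc ▸ hF)
  rwa [hsum, eLpNorm_two_sum_fourier, ← ENNReal.ofReal_mul hC.le] at this

/-- **Rudin**: if `E ⊆ ℤ` is a `Λ(p)` set for some `p > 2`, then there is a constant `C`
such that `card (E ∩ {a + d, a + 2d, …, a + Nd}) ≤ C * N ^ (2/p)` for all integers `a`,
`d ≠ 0` and all `N ≥ 1`. -/
theorem lambda_set_arithmetic_progression_bound (p : ℝ) (hp : 2 < p) (E : Set ℤ)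
    (hE : IsLambdaSet p E) :
    ∃ C : ℝ, 0 < C ∧ ∀ a d : ℤ, d ≠ 0 → ∀ N : ℕ, 0 < N →
      ((E ∩ ((fun k : ℤ => a + k * d) '' Set.Icc 1 (N : ℤ))).ncard : ℝ) ≤
        C * (N : ℝ) ^ (2 / p) := by
  classical
  obtain ⟨C, hC, hbound⟩ := hE.exists_eLpNorm_sum_fourier_le
  refine ⟨12 * C ^ 2, by positivity, fun a d hd N hN => ?_⟩
  set g : ℤ → ℤ := fun k => a + k * d
  have hg : g.Injective := fun k l h => mul_right_cancel₀ hd (add_left_cancel h)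
  set K : Finset ℤ := {k ∈ Finset.Icc 1 (N : ℤ) | g k ∈ E}
  have hcard : (E ∩ g '' Set.Icc 1 (N : ℤ)).ncard = K.card := by
    rw [Set.inter_comm, ← Set.image_inter_preimage, Set.ncard_image_of_injective _ hg,
      ← Set.ncard_coe_finset]
    congr 1; ext; simp [K]
  have hupper := hbound (K.image g) <| by
    rw [Finset.coe_image, Set.image_subset_iff]
    exact fun k hk => (Finset.mem_filter.1 hk).2
  simp only [Finset.sum_image fun k _ l _ h => hg h, Finset.card_image_of_injective _ hg]
    at hupper
  have hlower := ofReal_le_eLpNorm_sum_fourier_progression (by linarith : 0 < p) a hd hN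
    (K := K) (Finset.filter_subset _ _)
  rw [hcard]
  exact le_of_half_mul_rpow_le_mul_sqrt hp.le K.card.cast_nonneg (Nat.cast_pos.2 hN)
    ((ENNReal.ofReal_le_ofReal_iff (by positivity)).1 (hlower.trans hupper))
end
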